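/- arXiv:1501.03753 — 5 statements merged into one kernel-verified Lean document; each statement's English description precedes it below -/
import Mathlib

section
/- Let R be a commutative ring, let 𝔪₁ ≠ 𝔪₂ be two distinct maximal ideals of R, and let σ : R/𝔪₁ → R/𝔪₂ be a ring isomorphism. Then A := { f ∈ R : σ(f mod 𝔪₁) = f mod 𝔪₂ } is a maximal subring of R; moreover 𝔪₁ ∩ 𝔪₂ = { f ∈ R : σ(f mod 𝔪₁) = 0 and f mod 𝔪₂ = 0 } is a maximal ideal of the ring A which is also an ideal of R, and the induced maps A/(𝔪₁ ∩ 𝔪₂) → R/𝔪₁ and A/(𝔪₁ ∩ 𝔪₂) → R/𝔪₂ are ring isomorphisms. -/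
/-- `A` is a maximal subring of `R`: `A ≠ R` and there is no subring strictly
between `A` and `R`. -/
def IsMaximalSubring {R : Type*} [Ring R] (A : Subring R) : Prop :=
  A ≠ ⊤ ∧ ∀ B : Subring R, A < B → B = ⊤

theorem glueing_two_closed_points {R : Type*} [CommRing R]
    (m1 m2 : Ideal R) (hm1 : m1.IsMaximal) (hm2 : m2.IsMaximal) (hne : m1 ≠ m2)
    (σ : (R ⧸ m1) ≃+* (R ⧸ m2)) :
    -- `A = { f ∈ R : σ(f mod 𝔪₁) = f mod 𝔪₂ }` is a maximal subring of `R`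
    IsMaximalSubring
      (RingHom.eqLocus ((σ : (R ⧸ m1) →+* (R ⧸ m2)).comp (Ideal.Quotient.mk m1))
        (Ideal.Quotient.mk m2)) ∧
    -- `𝔪₁ ∩ 𝔪₂` is the stated set
    (((m1 ⊓ m2 : Ideal R) : Set R) =
      {f : R | σ (Ideal.Quotient.mk m1 f) = 0 ∧ Ideal.Quotient.mk m2 f = 0}) ∧
    -- `𝔪₁ ∩ 𝔪₂` (an ideal of `R`) is contained in `A` ...
    (((m1 ⊓ m2 : Ideal R) : Set R) ⊆
      (RingHom.eqLocus ((σ : (R ⧸ m1) →+* (R ⧸ m2)).comp (Ideal.Quotient.mk m1))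
        (Ideal.Quotient.mk m2) : Set R)) ∧
    -- ... and, viewed as an ideal of the ring `A`, it is a maximal ideal
    (Ideal.comap
      (RingHom.eqLocus ((σ : (R ⧸ m1) →+* (R ⧸ m2)).comp (Ideal.Quotient.mk m1))
        (Ideal.Quotient.mk m2)).subtype (m1 ⊓ m2)).IsMaximal ∧
    -- the induced map `A/(𝔪₁ ∩ 𝔪₂) → R/𝔪₁` is a ring isomorphism
    (Function.Surjective ((Ideal.Quotient.mk m1).comp
      (RingHom.eqLocus ((σ : (R ⧸ m1) →+* (R ⧸ m2)).comp (Ideal.Quotient.mk m1))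
        (Ideal.Quotient.mk m2)).subtype) ∧
     RingHom.ker ((Ideal.Quotient.mk m1).comp
      (RingHom.eqLocus ((σ : (R ⧸ m1) →+* (R ⧸ m2)).comp (Ideal.Quotient.mk m1))
        (Ideal.Quotient.mk m2)).subtype) =
      Ideal.comap
        (RingHom.eqLocus ((σ : (R ⧸ m1) →+* (R ⧸ m2)).comp (Ideal.Quotient.mk m1))
          (Ideal.Quotient.mk m2)).subtype (m1 ⊓ m2)) ∧
    -- the induced map `A/(𝔪₁ ∩ 𝔪₂) → R/𝔪₂` is a ring isomorphism
    (Function.Surjective ((Ideal.Quotient.mk m2).comp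
      (RingHom.eqLocus ((σ : (R ⧸ m1) →+* (R ⧸ m2)).comp (Ideal.Quotient.mk m1))
        (Ideal.Quotient.mk m2)).subtype) ∧
     RingHom.ker ((Ideal.Quotient.mk m2).comp
      (RingHom.eqLocus ((σ : (R ⧸ m1) →+* (R ⧸ m2)).comp (Ideal.Quotient.mk m1))
        (Ideal.Quotient.mk m2)).subtype) =
      Ideal.comap
        (RingHom.eqLocus ((σ : (R ⧸ m1) →+* (R ⧸ m2)).comp (Ideal.Quotient.mk m1))
          (Ideal.Quotient.mk m2)).subtype (m1 ⊓ m2)) := by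
  haveI := hm1; haveI := hm2
  letI : Field (R ⧸ m1) := Ideal.Quotient.field m1
  letI : Field (R ⧸ m2) := Ideal.Quotient.field m2
  set A := RingHom.eqLocus ((σ : (R ⧸ m1) →+* (R ⧸ m2)).comp (Ideal.Quotient.mk m1))
    (Ideal.Quotient.mk m2) with hA
  have memA : ∀ f : R, f ∈ A ↔ σ (Ideal.Quotient.mk m1 f) = Ideal.Quotient.mk m2 f := by
    intro f; rfl
  -- CRT
  have hsup : m1 ⊔ m2 = ⊤ := hm1.coprime_of_ne hm2 hne
  obtain ⟨u, hu, v, hv, huv⟩ := Submodule.mem_sup.mp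
    (by rw [hsup]; exact Submodule.mem_top : (1 : R) ∈ m1 ⊔ m2)
  have crt : ∀ (x : R ⧸ m1) (y : R ⧸ m2), ∃ f : R,
      Ideal.Quotient.mk m1 f = x ∧ Ideal.Quotient.mk m2 f = y := by
    intro x y
    obtain ⟨r, hr⟩ := Ideal.Quotient.mk_surjective x
    obtain ⟨s, hs⟩ := Ideal.Quotient.mk_surjective y
    refine ⟨r * v + s * u, ?_, ?_⟩
    · have h1 : Ideal.Quotient.mk m1 u = 0 := Ideal.Quotient.eq_zero_iff_mem.mpr hu
      have h2 : Ideal.Quotient.mk m1 v = 1 := by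
        have : Ideal.Quotient.mk m1 (u + v) = 1 := by rw [huv]; simp
        simpa [h1] using this
      simp [map_add, map_mul, h1, h2, hr]
    · have h1 : Ideal.Quotient.mk m2 v = 0 := Ideal.Quotient.eq_zero_iff_mem.mpr hv
      have h2 : Ideal.Quotient.mk m2 u = 1 := by
        have : Ideal.Quotient.mk m2 (u + v) = 1 := by rw [huv]; simp
        simpa [h1] using this
      simp [map_add, map_mul, h1, h2, hs]
  -- surjectivity of A → R/m1 and A → R/m2
  have surj1 : Function.Surjective ((Ideal.Quotient.mk m1).comp A.subtype) := by
    intro x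
    obtain ⟨f, hf1, hf2⟩ := crt x (σ x)
    exact ⟨⟨f, by rw [memA, hf1, hf2]⟩, hf1⟩
  have surj2 : Function.Surjective ((Ideal.Quotient.mk m2).comp A.subtype) := by
    intro y
    obtain ⟨f, hf1, hf2⟩ := crt (σ.symm y) y
    exact ⟨⟨f, by rw [memA, hf1, hf2]; simp⟩, hf2⟩
  -- kernel computations
  have ker1 : RingHom.ker ((Ideal.Quotient.mk m1).comp A.subtype) =
      Ideal.comap A.subtype (m1 ⊓ m2) := by
    ext x
    obtain ⟨f, hf⟩ := x
    rw [RingHom.mem_ker, Ideal.mem_comap]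
    show Ideal.Quotient.mk m1 f = 0 ↔ f ∈ m1 ⊓ m2
    rw [Ideal.mem_inf]
    constructor
    · intro h
      have h2 : Ideal.Quotient.mk m2 f = 0 := by rw [← (memA f).mp hf, h, map_zero]
      exact ⟨Ideal.Quotient.eq_zero_iff_mem.mp h, Ideal.Quotient.eq_zero_iff_mem.mp h2⟩
    · intro ⟨h1, _⟩; exact Ideal.Quotient.eq_zero_iff_mem.mpr h1
  have ker2 : RingHom.ker ((Ideal.Quotient.mk m2).comp A.subtype) =
      Ideal.comap A.subtype (m1 ⊓ m2) := by
    ext x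
    obtain ⟨f, hf⟩ := x
    rw [RingHom.mem_ker, Ideal.mem_comap]
    show Ideal.Quotient.mk m2 f = 0 ↔ f ∈ m1 ⊓ m2
    rw [Ideal.mem_inf]
    constructor
    · intro h
      have h1 : σ (Ideal.Quotient.mk m1 f) = σ 0 := by
        rw [(memA f).mp hf, h, map_zero]
      have h1' : Ideal.Quotient.mk m1 f = 0 := σ.injective h1
      exact ⟨Ideal.Quotient.eq_zero_iff_mem.mp h1', Ideal.Quotient.eq_zero_iff_mem.mp h⟩
    · intro ⟨_, h2⟩; exact Ideal.Quotient.eq_zero_iff_mem.mpr h2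
  refine ⟨⟨?_, ?_⟩, ?_, ?_, ?_, ⟨surj1, ker1⟩, ⟨surj2, ker2⟩⟩
  · -- A ≠ ⊤
    intro htop
    have hnle : ¬ m1 ≤ m2 := fun h => hne (hm1.eq_of_le hm2.ne_top h)
    obtain ⟨f, hf1, hf2⟩ := Set.not_subset.mp hnle
    have hfA : f ∈ A := htop ▸ Subring.mem_top f
    have h := (memA f).mp hfA
    rw [Ideal.Quotient.eq_zero_iff_mem.mpr hf1, map_zero] at h
    exact hf2 (Ideal.Quotient.eq_zero_iff_mem.mp h.symm)
  · -- maximality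
    intro B hB
    obtain ⟨b, hbB, hbA⟩ := SetLike.exists_of_lt hB
    set δ : R ⧸ m2 := Ideal.Quotient.mk m2 b - σ (Ideal.Quotient.mk m1 b) with hδdef
    have hδ : δ ≠ 0 := by
      intro h
      apply hbA
      rw [memA]
      rw [hδdef, sub_eq_zero] at h
      exact h.symm
    rw [eq_top_iff]
    rintro r -
    set ε : R ⧸ m2 := Ideal.Quotient.mk m2 r - σ (Ideal.Quotient.mk m1 r) with hε
    obtain ⟨c, hc⟩ := surj2 (ε * δ⁻¹)
    have hc2 : Ideal.Quotient.mk m2 (c : R) = ε * δ⁻¹ := hc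
    have hc1 : σ (Ideal.Quotient.mk m1 (c : R)) = ε * δ⁻¹ := by
      rw [(memA _).mp c.2]; exact hc2
    have key : ε * δ⁻¹ * δ = ε := by
      rw [mul_assoc, inv_mul_cancel₀ hδ, mul_one]
    have hsub : r - (c : R) * b ∈ A := by
      rw [memA, map_sub, map_sub, map_sub, map_mul, map_mul, map_mul, hc1, hc2]
      linear_combination hε + key - ε * δ⁻¹ * hδdef
    have hr : r = (r - (c : R) * b) + (c : R) * b := by ring
    rw [hr]
    exact B.add_mem (hB.le hsub) (B.mul_mem (hB.le c.2) hbB)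
  · -- set equality
    ext f
    simp only [SetLike.mem_coe, Ideal.mem_inf, Set.mem_setOf_eq]
    constructor
    · intro ⟨h1, h2⟩
      exact ⟨by rw [Ideal.Quotient.eq_zero_iff_mem.mpr h1, map_zero],
        Ideal.Quotient.eq_zero_iff_mem.mpr h2⟩
    · intro ⟨h1, h2⟩
      refine ⟨?_, Ideal.Quotient.eq_zero_iff_mem.mp h2⟩
      have h0 : σ (Ideal.Quotient.mk m1 f) = σ 0 := by rw [h1, map_zero]
      exact Ideal.Quotient.eq_zero_iff_mem.mp (σ.injective h0)
  · -- inclusion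
    intro f hf
    rw [SetLike.mem_coe, Ideal.mem_inf] at hf
    rw [SetLike.mem_coe, memA, Ideal.Quotient.eq_zero_iff_mem.mpr hf.1, map_zero,
      Ideal.Quotient.eq_zero_iff_mem.mpr hf.2]
  · -- maximality of the comap ideal
    have h := RingHom.ker_isMaximal_of_surjective _ surj1
    rwa [ker1] at h
end

section
/- Let R be a commutative ring, let 𝔪 be a maximal ideal of R, and let δ : R → R/𝔪 be an additive map satisfying δ(fg) = (f mod 𝔪)·δ(g) + (g mod 𝔪)·δ(f) for all f, g ∈ R, and such that δ(e) ≠ 0 for some e ∈ 𝔪. Then A := { f ∈ R : δ(f) = 0 } is a maximal subring of R, and { f ∈ R : δ(f) = 0 and f ∈ 𝔪 } is a maximal ideal of A whose residue field is isomorphic to R/𝔪. -/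
theorem deleting_a_tangent_direction {R : Type*} [CommRing R]
    (m : Ideal R) (hm : m.IsMaximal) (δ : R →+ R ⧸ m)
    (hleib : ∀ f g : R,
      δ (f * g) = Ideal.Quotient.mk m f * δ g + Ideal.Quotient.mk m g * δ f)
    (he : ∃ e ∈ m, δ e ≠ 0) :
    ∃ A : Subring R, (A : Set R) = {f : R | δ f = 0} ∧ IsMaximalSubring A ∧
      (Ideal.comap A.subtype m : Set ↥A) = {f : ↥A | δ (f : R) = 0 ∧ (f : R) ∈ m} ∧
      (Ideal.comap A.subtype m).IsMaximal ∧
      Nonempty ((↥A ⧸ Ideal.comap A.subtype m) ≃+* R ⧸ m) := by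
  haveI := hm
  letI : Field (R ⧸ m) := Ideal.Quotient.field m
  obtain ⟨e, hem, hde⟩ := he
  have h1 : δ 1 = 0 := by
    have h := hleib 1 1
    simp only [mul_one, map_one, one_mul] at h
    exact left_eq_add.mp h
  set A : Subring R :=
    { carrier := {f | δ f = 0}
      one_mem' := h1
      mul_mem' := fun {a b} ha hb => by
        simp only [Set.mem_setOf_eq] at *
        rw [hleib a b, ha, hb, mul_zero, mul_zero, add_zero]
      add_mem' := fun {a b} ha hb => by
        simp only [Set.mem_setOf_eq] at *
        rw [map_add, ha, hb, add_zero]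
      zero_mem' := map_zero δ
      neg_mem' := fun {a} ha => by
        simp only [Set.mem_setOf_eq] at *
        rw [map_neg, ha, neg_zero] } with hA
  have hmemA : ∀ f : R, f ∈ A ↔ δ f = 0 := fun f => Iff.rfl
  have hπe : Ideal.Quotient.mk m e = 0 := (Ideal.Quotient.eq_zero_iff_mem).mpr hem
  -- surjectivity of A onto R/m
  have hsurj : ∀ f : R, ∃ a : R, δ a = 0 ∧
      Ideal.Quotient.mk m a = Ideal.Quotient.mk m f := by
    intro f
    obtain ⟨c, hc⟩ := Ideal.Quotient.mk_surjective (δ f * (δ e)⁻¹)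
    refine ⟨f - c * e, ?_, ?_⟩
    · rw [map_sub, hleib c e, hc, hπe, zero_mul, add_zero,
        mul_assoc, inv_mul_cancel₀ hde, mul_one, sub_self]
    · rw [map_sub, map_mul, hπe, mul_zero, sub_zero]
  have hmax : IsMaximalSubring A := by
    constructor
    · intro h
      exact hde ((hmemA e).mp (h ▸ Subring.mem_top e))
    · intro B hAB
      obtain ⟨b, hbB, hbA⟩ := SetLike.exists_of_lt hAB
      have hdb : δ b ≠ 0 := fun h => hbA ((hmemA b).mpr h)
      rw [eq_top_iff]
      intro f _
      obtain ⟨r, hr⟩ := Ideal.Quotient.mk_surjective (δ f * (δ b)⁻¹)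
      obtain ⟨a, ha, har⟩ := hsurj r
      have key : δ (f - a * b) = 0 := by
        rw [map_sub, hleib a b, ha, mul_zero, add_zero, har, hr,
          mul_assoc, inv_mul_cancel₀ hdb, mul_one, sub_self]
      have h1 : f - a * b ∈ B := hAB.le ((hmemA _).mpr key)
      have h2 : a * b ∈ B := mul_mem (hAB.le ((hmemA a).mpr ha)) hbB
      have := add_mem h1 h2
      rwa [sub_add_cancel] at this
  set φ : ↥A →+* R ⧸ m := (Ideal.Quotient.mk m).comp A.subtype with hφ
  have hφsurj : Function.Surjective φ := by
    intro x
    obtain ⟨f, hf⟩ := Ideal.Quotient.mk_surjective x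
    obtain ⟨a, ha, har⟩ := hsurj f
    refine ⟨⟨a, (hmemA a).mpr ha⟩, ?_⟩
    show Ideal.Quotient.mk m a = x
    rw [har, hf]
  have hker : RingHom.ker φ = Ideal.comap A.subtype m := by
    rw [hφ, ← RingHom.comap_ker, Ideal.mk_ker]
  refine ⟨A, rfl, hmax, ?_, ?_, ?_⟩
  · ext f
    simp only [SetLike.mem_coe, Ideal.mem_comap, Subring.coe_subtype, Set.mem_setOf_eq]
    exact ⟨fun h => ⟨(hmemA _).mp f.2, h⟩, fun h => h.2⟩
  · rw [← hker]
    exact RingHom.ker_isMaximal_of_surjective φ hφsurj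
  · rw [← hker]
    exact ⟨RingHom.quotientKerEquivOfSurjective hφsurj⟩
end

section
/- Let A be a maximal subring of a commutative ring R such that the induced map Spec R → Spec A (taking preimages of prime ideals under the inclusion A ⊆ R) is surjective. Then at least one of the following holds: (a) there exist distinct maximal ideals 𝔫₁ ≠ 𝔫₂ of R and a ring isomorphism σ : R/𝔫₁ → R/𝔫₂ such that A = { f ∈ R : σ(f mod 𝔫₁) = f mod 𝔫₂ }; (b) there exist a maximal ideal 𝔫 of R and an additive map δ : R → R/𝔫 satisfying δ(fg) = (f mod 𝔫)·δ(g) + (g mod 𝔫)·δ(f) for all f, g ∈ R and δ(e) ≠ 0 for some e ∈ 𝔫, such that A = { f ∈ R : δ(f) = 0 }; (c) there exists a maximal ideal 𝔫 of R with 𝔫 ⊆ A such that the image F of A in R/𝔫 is a subfield of R/𝔫 with F ≠ R/𝔫 and there is no subfield F' with F ⊊ F' ⊊ R/𝔫. -/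
open Polynomial

namespace MaxSub

variable {R : Type*} [CommRing R] {A : Subring R}

/-- If `A` is maximal and `A ≤ B ≠ ⊤` then `A = B`. -/
lemma eq_of_max (hmax : ∀ B : Subring R, A < B → B = ⊤) {B : Subring R}
    (hAB : A ≤ B) (hB : B ≠ ⊤) : A = B := by
  by_contra h
  exact hB (hmax B (lt_of_le_of_ne hAB h))

lemma top_of_mem (hmax : ∀ B : Subring R, A < B → B = ⊤) {B : Subring R}
    (hAB : A ≤ B) {x : R} (hx : x ∉ A) (hxB : x ∈ B) : B = ⊤ :=
  hmax B (lt_of_le_of_ne hAB (fun h => hx (h ▸ hxB)))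

/-- If `z ^ n` is an `A`-combination of lower powers of `z`, then `z` is integral over `A`. -/
lemma isIntegral_of_pow_eq_sum {z : R} {n : ℕ} (hn : 0 < n) (e : ℕ → A)
    (h : z ^ n = ∑ i ∈ Finset.range n, (e i : R) * z ^ i) : IsIntegral A z := by
  refine ⟨X ^ n - ∑ i ∈ Finset.range n, C (e i) * X ^ i, ?_, ?_⟩
  · refine monic_X_pow_sub ?_
    refine lt_of_le_of_lt (Polynomial.degree_sum_le _ _) ?_
    rw [Finset.sup_lt_iff (by exact_mod_cast WithBot.bot_lt_coe n)]
    intro i hi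
    refine lt_of_le_of_lt (degree_C_mul_X_pow_le i (e i)) ?_
    exact_mod_cast Finset.mem_range.mp hi
  · have hC : ∀ a : A, (algebraMap A R) a = (a : R) := fun a => rfl
    simp only [eval₂_sub, eval₂_finset_sum, eval₂_mul, eval₂_pow, eval₂_X, eval₂_C, hC]
    rw [← h]; ring

open Finset

section CaseI

lemma exists_not_mem (hAne : A ≠ ⊤) : ∃ x : R, x ∉ A := by
  by_contra h
  push_neg at h
  exact hAne ((Subring.eq_top_iff' A).mpr h)

/-- the "denominator" ideal of an element -/
def denom (A : Subring R) (x : R) : Ideal A where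
  carrier := {s : A | (s : R) * x ∈ A}
  add_mem' := by
    intro a b ha hb
    simp only [Set.mem_setOf_eq] at *
    push_cast
    rw [add_mul]
    exact add_mem ha hb
  zero_mem' := by simp [Set.mem_setOf_eq, A.zero_mem]
  smul_mem' := by
    intro c a ha
    simp only [Set.mem_setOf_eq, smul_eq_mul] at *
    push_cast
    rw [mul_assoc]
    exact mul_mem c.2 ha

lemma exists_crucial (hmax : ∀ B : Subring R, A < B → B = ⊤) (hAne : A ≠ ⊤) :
    ∃ m : Ideal A, m.IsMaximal ∧ ∀ r : R, r ∉ A → ∀ s : A, (s : R) * r ∈ A → s ∈ m := by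
  obtain ⟨x, hx⟩ := exists_not_mem hAne
  have hI : denom A x ≠ ⊤ := by
    intro h
    have : ((1 : A) : R) * x ∈ A := (Ideal.eq_top_iff_one _).mp h
    rw [OneMemClass.coe_one, one_mul] at this
    exact hx this
  obtain ⟨m, hm, hIm⟩ := Ideal.exists_le_maximal _ hI
  have h1m : (1 : A) ∉ m := fun h => hm.ne_top ((Ideal.eq_top_iff_one _).mpr h)
  -- saturation subring
  let S : Subring R :=
    { carrier := {r : R | ∃ s : A, s ∉ m ∧ (s : R) * r ∈ A},
      one_mem' := ⟨1, h1m, by simp [A.one_mem]⟩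
      zero_mem' := ⟨1, h1m, by simp [A.zero_mem]⟩
      neg_mem' := by
        rintro r ⟨s, hs, hsr⟩
        exact ⟨s, hs, by rw [mul_neg]; exact neg_mem hsr⟩
      add_mem' := by
        rintro r r' ⟨s, hs, hsr⟩ ⟨s', hs', hs'r'⟩
        refine ⟨s * s', fun h => ?_, ?_⟩
        · rcases (hm.isPrime.mem_or_mem h) with h' | h' <;> [exact hs h'; exact hs' h']
        · have : ((s * s' : A) : R) * (r + r') = (s' : R) * ((s : R) * r) + (s : R) * ((s' : R) * r') := by
            push_cast; ring
          rw [this]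
          exact add_mem (mul_mem s'.2 hsr) (mul_mem s.2 hs'r')
      mul_mem' := by
        rintro r r' ⟨s, hs, hsr⟩ ⟨s', hs', hs'r'⟩
        refine ⟨s * s', fun h => ?_, ?_⟩
        · rcases (hm.isPrime.mem_or_mem h) with h' | h' <;> [exact hs h'; exact hs' h']
        · have : ((s * s' : A) : R) * (r * r') = ((s : R) * r) * ((s' : R) * r') := by
            push_cast; ring
          rw [this]
          exact mul_mem hsr hs'r' }
  have hAS : A ≤ S := fun a ha => ⟨1, h1m, by simpa using ha⟩
  have hxS : x ∉ S := by
    rintro ⟨s, hs, hsx⟩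
    exact hs (hIm hsx)
  have hS : S ≠ ⊤ := fun h => hxS (h ▸ Subring.mem_top x)
  have hAeq : A = S := eq_of_max hmax hAS hS
  refine ⟨m, hm, ?_⟩
  intro r hr s hsr
  by_contra hsm
  exact hr (hAeq ▸ (⟨s, hsm, hsr⟩ : r ∈ S))


lemma exists_rep (hmax : ∀ B : Subring R, A < B → B = ⊤)
    (hic : ∀ r : R, IsIntegral A r → r ∈ A) {x : R} (hx : x ∉ A) :
    ∃ (N : ℕ) (d : ℕ → A), d 1 = 0 ∧ x = ∑ i ∈ Finset.range (N + 1), (d i : R) * x ^ i := by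
  classical
  -- x^2 ∉ A
  have hx2 : x ^ 2 ∉ A := by
    intro h
    refine hx (hic x (isIntegral_of_pow_eq_sum (by norm_num : (0:ℕ) < 2)
      (fun i => if i = 0 then ⟨x ^ 2, h⟩ else 0) ?_))
    simp [Finset.sum_range_succ]
  -- adjoin A {x^2} = ⊤
  have hle : A ≤ (Algebra.adjoin A ({x ^ 2} : Set R)).toSubring := fun a ha =>
    (Algebra.adjoin A ({x ^ 2} : Set R)).algebraMap_mem ⟨a, ha⟩
  have htop : (Algebra.adjoin A ({x ^ 2} : Set R)).toSubring = ⊤ :=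
    top_of_mem hmax hle hx2 (Algebra.subset_adjoin rfl)
  have hxmem : x ∈ Algebra.adjoin A ({x ^ 2} : Set R) := by
    have : x ∈ ((⊤ : Subring R) : Set R) := trivial
    rw [← htop] at this
    exact this
  rw [Algebra.adjoin_singleton_eq_range_aeval] at hxmem
  obtain ⟨p, hp⟩ := hxmem
  -- x = ∑_{t ∈ range (M+1)} coeff t • (x^2)^t
  have hrep := (Polynomial.aeval_eq_sum_range (R := A) (p := p) (x ^ 2)).symm.trans hp
  set M := p.natDegree with hM
  -- define d
  refine ⟨2 * M + 1, fun i => if 2 ∣ i then p.coeff (i / 2) else 0, by norm_num, ?_⟩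
  have key : ∑ i ∈ Finset.range (2 * M + 1 + 1),
      ((if 2 ∣ i then p.coeff (i / 2) else (0:A)) : R) * x ^ i
      = ∑ t ∈ Finset.range (M + 1), (p.coeff t : R) * (x ^ 2) ^ t := by
    rw [← Finset.sum_filter_of_ne (p := fun i => 2 ∣ i)
      (by
        intro i _ hne
        by_contra hdvd
        simp [hdvd] at hne)]
    have hfe : (Finset.range (2 * M + 1 + 1)).filter (fun i => 2 ∣ i)
        = (Finset.range (M + 1)).image (fun t => 2 * t) := by
      ext i
      simp only [Finset.mem_filter, Finset.mem_range, Finset.mem_image]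
      constructor
      · rintro ⟨hlt, t, rfl⟩
        exact ⟨t, by omega, rfl⟩
      · rintro ⟨t, ht, rfl⟩
        exact ⟨by omega, t, rfl⟩
    rw [hfe, Finset.sum_image (by intro a _ b _ h; dsimp only at h; omega)]
    refine Finset.sum_congr rfl ?_
    intro t _
    have h2t : 2 ∣ 2 * t := ⟨t, rfl⟩
    simp [h2t, Nat.mul_div_cancel_left t (by norm_num : 0 < 2), pow_mul]
  simp only [apply_ite (fun a : A => (a : R)), ZeroMemClass.coe_zero] at key ⊢
  rw [key]
  conv_lhs => rw [← hrep]
  exact Finset.sum_congr rfl (fun t _ => by rw [Algebra.smul_def]; rfl)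


lemma descent (hic : ∀ r : R, IsIntegral A r → r ∈ A) {m : Ideal A} (hm : m.IsMaximal)
    (hcru : ∀ r : R, r ∉ A → ∀ s : A, (s : R) * r ∈ A → s ∈ m)
    {q : Ideal R} (hqm : ∀ s : A, s ∈ m ↔ (s : R) ∈ q)
    {y : R} (hy : y ∈ q) (hyA : y ∉ A) :
    ∀ n (d : ℕ → A), d 1 ∈ m → y = ∑ i ∈ Finset.range (n + 1), (d i : R) * y ^ i → False := by
  classical
  intro n
  induction n with
  | zero =>
    intro d _ hrel
    simp only [zero_add, Finset.sum_range_one, pow_zero, mul_one] at hrel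
    exact hyA (hrel ▸ (d 0).2)
  | succ n IH =>
    intro d hd1 hrel
    rcases Nat.eq_zero_or_pos n with hn0 | hn1
    · -- base : y = d0 + d1 * y
      subst hn0
      simp only [Finset.sum_range_succ, Finset.sum_range_zero, zero_add, pow_zero, mul_one,
        pow_one] at hrel
      have hrel' : y = (d 0 : R) + (d 1 : R) * y := hrel
      have h1 : ((1 - d 1 : A) : R) * y = ((d 0 : A) : R) := by
        push_cast
        linear_combination hrel'
      have hd1n : (1 - d 1) ∉ m := by
        intro h
        exact hm.ne_top ((Ideal.eq_top_iff_one _).mpr (by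
          have : (1 : A) = (1 - d 1) + d 1 := by ring
          rw [this]; exact add_mem h hd1))
      obtain ⟨s, i₀, hi₀, hsi⟩ := hm.exists_inv hd1n
      have hmem : ((s * (1 - d 1) : A) : R) * y ∈ A := by
        have : ((s * (1 - d 1) : A) : R) * y = (s : R) * (((1 - d 1 : A) : R) * y) := by
          push_cast; ring
        rw [this, h1]
        exact mul_mem s.2 (d 0).2
      have : s * (1 - d 1) ∈ m := hcru y hyA _ hmem
      have h1m : (1 : A) ∈ m := by
        rw [← hsi]; exact add_mem this hi₀
      exact hm.ne_top ((Ideal.eq_top_iff_one _).mpr h1m)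
    · -- step
      set D := d (n + 1) with hD
      set z := (D : R) * y with hz
      have key : (D : R) * y ^ (n + 1) = y - ∑ i ∈ Finset.range (n + 1), (d i : R) * y ^ i := by
        rw [Finset.sum_range_succ] at hrel
        linear_combination -hrel
      -- z is integral over A
      set e : ℕ → A := fun i => (if i = 1 then D ^ (n - 1) else 0) - d i * D ^ (n - i) with he
      have hzpow : z ^ (n + 1) = ∑ i ∈ Finset.range (n + 1), (e i : R) * z ^ i := by
        have hterm : ∀ i ∈ Finset.range (n + 1),
            (e i : R) * z ^ i
            = (if i = 1 then (D : R) ^ n * y else 0) - (d i : R) * ((D : R) ^ n * y ^ i) := by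
          intro i hi
          have hin : i ≤ n := Nat.lt_succ_iff.mp (Finset.mem_range.mp hi)
          rw [he]
          by_cases h1 : i = 1
          · subst h1
            simp only [if_pos rfl]
            have h1n : (D : R) ^ (n - 1) * (D : R) = (D : R) ^ n := by
              have := pow_sub_mul_pow (D : R) hn1
              rwa [pow_one] at this
            push_cast
            rw [hz, pow_one]
            linear_combination (y - (d 1 : R) * y) * h1n
          · simp only [if_neg h1]
            push_cast
            rw [hz, mul_pow]
            linear_combination (-(d i : R) * y ^ i) * (pow_sub_mul_pow (D : R) hin)
        rw [Finset.sum_congr rfl hterm]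
        rw [Finset.sum_sub_distrib]
        rw [Finset.sum_ite_eq' (Finset.range (n+1)) 1 (fun _ => (D : R) ^ n * y)]
        have h1le : 1 ≤ n := hn1
        simp only [Finset.mem_range, Nat.lt_succ_iff, h1le, if_true]
        have : ∑ i ∈ Finset.range (n + 1), (d i : R) * ((D : R) ^ n * y ^ i)
            = (D : R) ^ n * ∑ i ∈ Finset.range (n + 1), (d i : R) * y ^ i := by
          rw [Finset.mul_sum]
          exact Finset.sum_congr rfl (fun i _ => by ring)
        rw [this]
        have hzn : z ^ (n + 1) = (D : R) ^ n * ((D : R) * y ^ (n + 1)) := by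
          rw [hz, mul_pow, pow_succ]
          ring
        rw [hzn, key]
        ring
      have hzA : z ∈ A := hic z (isIntegral_of_pow_eq_sum (Nat.succ_pos n) e hzpow)
      set zA : A := ⟨z, hzA⟩ with hzA'
      have hzm : zA ∈ m := (hqm zA).mpr (by
        show (D : R) * y ∈ q
        exact Ideal.mul_mem_left _ _ hy)
      -- new relation of degree n
      set d' : ℕ → A := Function.update d n (d n + zA) with hd'
      have hd'1 : d' 1 ∈ m := by
        rcases eq_or_ne n 1 with h | h
        · subst h
          rw [hd', Function.update_self]
          exact add_mem hd1 hzm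
        · rw [hd', Function.update_of_ne (Ne.symm h)]
          exact hd1
      refine IH d' hd'1 ?_
      have hsplit : ∑ i ∈ Finset.range (n + 1), (d' i : R) * y ^ i
          = ∑ i ∈ Finset.range n, (d i : R) * y ^ i + ((d n : R) + z) * y ^ n := by
        rw [Finset.sum_range_succ]
        congr 1
        · exact Finset.sum_congr rfl (fun i hi => by
            rw [hd', Function.update_of_ne (Nat.ne_of_lt (Finset.mem_range.mp hi))])
        · rw [hd', Function.update_self]
          push_cast
          rfl
      rw [hsplit]
      have hrel2 : y = ∑ i ∈ Finset.range (n + 1), (d i : R) * y ^ i + (D : R) * y ^ (n + 1) := by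
        rw [← Finset.sum_range_succ]
        exact hrel
      rw [Finset.sum_range_succ] at hrel2
      rw [hz]
      calc y = ∑ i ∈ Finset.range n, (d i : R) * y ^ i + (d n : R) * y ^ n
            + (D : R) * y ^ (n + 1) := hrel2
        _ = ∑ i ∈ Finset.range n, (d i : R) * y ^ i + ((d n : R) + (D : R) * y) * y ^ n := by
            rw [pow_succ]
            ring


lemma sub_case (hic : ∀ r : R, IsIntegral A r → r ∈ A) {m : Ideal A} (hm : m.IsMaximal)
    {q : Ideal R} (hqm : ∀ s : A, s ∈ m ↔ (s : R) ∈ q)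
    (hsub : ∀ r ∈ q, r ∈ A) {x : R} (hx : x ∉ A)
    {N : ℕ} {d : ℕ → A} (hd1 : d 1 = 0)
    (hrel : x = ∑ i ∈ Finset.range (N + 1), (d i : R) * x ^ i) : False := by
  classical
  by_cases hall : ∀ i, 1 ≤ i → i ≤ N → d i ∈ m
  · -- x - d 0 ∈ q ⊆ A
    have hmem : x - (d 0 : R) ∈ q := by
      rw [Finset.sum_range_succ'] at hrel
      simp only [pow_zero, mul_one] at hrel
      have : x - (d 0 : R) = ∑ i ∈ Finset.range N, (d (i + 1) : R) * x ^ (i + 1) := by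
        linear_combination hrel
      rw [this]
      refine Ideal.sum_mem _ (fun i hi => ?_)
      have : d (i + 1) ∈ m := hall (i + 1) (Nat.succ_le_succ (Nat.zero_le i))
        (Nat.succ_le_of_lt (Finset.mem_range.mp hi))
      exact Ideal.mul_mem_right _ _ ((hqm _).mp this)
    have : x = (x - (d 0 : R)) + (d 0 : R) := by ring
    rw [this] at hx
    exact hx (add_mem (hsub _ hmem) (d 0).2)
  · push_neg at hall
    obtain ⟨i₁, hi₁1, hi₁N, hi₁m⟩ := hall
    set J := (Finset.range (N + 1)).filter (fun i => 1 ≤ i ∧ d i ∉ m) with hJ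
    have hJne : J.Nonempty :=
      ⟨i₁, Finset.mem_filter.mpr ⟨Finset.mem_range.mpr (by omega), hi₁1, hi₁m⟩⟩
    set j := J.max' hJne with hj
    have hjJ : j ∈ J := J.max'_mem hJne
    have hj1 : 1 ≤ j := (Finset.mem_filter.mp hjJ).2.1
    have hjm : d j ∉ m := (Finset.mem_filter.mp hjJ).2.2
    have hjN : j ≤ N := Nat.lt_succ_iff.mp (Finset.mem_range.mp (Finset.mem_filter.mp hjJ).1)
    have hj2 : 2 ≤ j := by
      rcases Nat.lt_or_ge j 2 with h | h
      · exfalso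
        have hj1' : j = 1 := by omega
        rw [hj1'] at hjm
        exact hjm (by rw [hd1]; exact zero_mem m)
      · exact h
    -- inverse of d j mod m
    obtain ⟨b, i₀, hi₀, hbi⟩ := hm.exists_inv hjm
    -- the q-element
    set q₀ := ((b * d j - 1 : A) : R) * x ^ j
      + ∑ i ∈ Finset.Ico (j + 1) (N + 1), ((b * d i : A) : R) * x ^ i with hq₀
    have hq₀q : q₀ ∈ q := by
      refine add_mem (Ideal.mul_mem_right _ _ ((hqm _).mp ?_)) (Ideal.sum_mem _ (fun i hi => ?_))
      · have : b * d j - 1 = -i₀ := by linear_combination hbi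
        rw [this]
        exact neg_mem hi₀
      · obtain ⟨hij, hiN⟩ := Finset.mem_Ico.mp hi
        have him : d i ∈ m := by
          by_contra hd
          have hiJ : i ∈ J := Finset.mem_filter.mpr
            ⟨Finset.mem_range.mpr hiN, by omega, hd⟩
          have := J.le_max' i hiJ
          omega
        exact Ideal.mul_mem_right _ _ ((hqm _).mp (Ideal.mul_mem_left _ _ him))
    set aq : A := ⟨q₀, hsub _ hq₀q⟩ with haq
    have haqR : (aq : R) = q₀ := rfl
    -- partition of the sum
    have hpartition : ∀ g : ℕ → R, ∑ i ∈ Finset.range (N + 1), g i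
        = (∑ i ∈ Finset.range j, g i + g j) + ∑ i ∈ Finset.Ico (j + 1) (N + 1), g i := by
      intro g
      rw [Finset.range_eq_Ico,
        ← Finset.sum_Ico_consecutive g (Nat.zero_le (j + 1)) (by omega : j + 1 ≤ N + 1)]
      congr 1
      rw [← Finset.range_eq_Ico]
      exact Finset.sum_range_succ g j
    have hbx : (b : R) * x = ∑ i ∈ Finset.range (N + 1), ((b * d i : A) : R) * x ^ i := by
      conv_lhs => rw [hrel]
      rw [Finset.mul_sum]
      exact Finset.sum_congr rfl (fun i _ => by push_cast; ring)
    have h1 := hpartition (fun i => ((b * d i : A) : R) * x ^ i)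
    rw [← hbx] at h1
    have hkey : x ^ j = (b : R) * x
        - ∑ i ∈ Finset.range j, ((b * d i : A) : R) * x ^ i - (aq : R) := by
      rw [haqR, hq₀]
      push_cast at h1 ⊢
      linear_combination -h1
    -- integrality
    set e : ℕ → A := fun i => (if i = 1 then b else 0) - b * d i - (if i = 0 then aq else 0)
      with he
    have hsum : ∑ i ∈ Finset.range j, (e i : R) * x ^ i
        = (b : R) * x - ∑ i ∈ Finset.range j, ((b * d i : A) : R) * x ^ i - (aq : R) := by
      have hterm : ∀ i ∈ Finset.range j, (e i : R) * x ^ i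
          = (if i = 1 then (b : R) * x ^ i else 0) - ((b * d i : A) : R) * x ^ i
            - (if i = 0 then (aq : R) * x ^ i else 0) := by
        intro i _
        rw [he]
        by_cases h1' : i = 1
        · subst h1'
          simp only [if_pos rfl, if_neg (by omega : (1:ℕ) ≠ 0)]
          push_cast
          ring
        · by_cases h0 : i = 0
          · subst h0
            simp only [if_neg (by omega : (0:ℕ) ≠ 1), if_pos rfl]
            push_cast
            ring
          · simp only [if_neg h1', if_neg h0]
            push_cast
            ring
      rw [Finset.sum_congr rfl hterm, Finset.sum_sub_distrib, Finset.sum_sub_distrib,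
        Finset.sum_ite_eq' (Finset.range j) 1 (fun i => (b : R) * x ^ i),
        Finset.sum_ite_eq' (Finset.range j) 0 (fun i => (aq : R) * x ^ i)]
      have h1j : (1:ℕ) ∈ Finset.range j := Finset.mem_range.mpr (by omega)
      have h0j : (0:ℕ) ∈ Finset.range j := Finset.mem_range.mpr (by omega)
      rw [if_pos h1j, if_pos h0j, pow_one, pow_zero, mul_one]
    exact hx (hic x (isIntegral_of_pow_eq_sum (by omega : 0 < j) e (by rw [hsum]; exact hkey)))

lemma caseI (hmax : ∀ B : Subring R, A < B → B = ⊤) (hAne : A ≠ ⊤)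
    (hic : ∀ r : R, IsIntegral A r → r ∈ A)
    (hsurj : Function.Surjective (PrimeSpectrum.comap A.subtype)) : False := by
  obtain ⟨m, hm, hcru⟩ := exists_crucial hmax hAne
  obtain ⟨q, hq⟩ := hsurj ⟨m, hm.isPrime⟩
  have hqm : ∀ s : A, s ∈ m ↔ (s : R) ∈ q.asIdeal := by
    intro s
    have : (PrimeSpectrum.comap A.subtype q).asIdeal = m := by rw [hq]
    rw [PrimeSpectrum.comap_asIdeal] at this
    rw [← this]
    rfl
  by_cases hsub : ∀ r ∈ q.asIdeal, r ∈ A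
  · obtain ⟨x, hx⟩ := exists_not_mem hAne
    obtain ⟨N, d, hd1, hrel⟩ := exists_rep hmax hic hx
    exact sub_case hic hm hqm hsub hx hd1 hrel
  · push_neg at hsub
    obtain ⟨y, hy, hyA⟩ := hsub
    obtain ⟨N, d, hd1, hrel⟩ := exists_rep hmax hic hyA
    exact descent hic hm hcru hqm hy hyA N d (by rw [hd1]; exact zero_mem m) hrel

end CaseI


section CaseII

/-- The conductor: the largest ideal of `R` contained in `A`. -/
def cond (A : Subring R) : Ideal R where
  carrier := {r : R | ∀ s : R, r * s ∈ A}
  add_mem' := by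
    intro a b ha hb s
    rw [add_mul]
    exact add_mem (ha s) (hb s)
  zero_mem' := by
    intro s
    rw [zero_mul]
    exact A.zero_mem
  smul_mem' := by
    intro c r hr s
    have : c • r * s = r * (c * s) := by rw [smul_eq_mul]; ring
    rw [this]
    exact hr (c * s)

lemma cond_le {r : R} (h : r ∈ cond A) : r ∈ A := by simpa using h 1

/-- The conductor, seen as an ideal of `A`. -/
def condA (A : Subring R) : Ideal A := (cond A).comap A.subtype

lemma mem_condA {a : A} : a ∈ condA A ↔ ∀ s : R, (a : R) * s ∈ A := Iff.rfl

lemma condA_ne_top (hAne : A ≠ ⊤) : condA A ≠ ⊤ := by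
  intro h
  obtain ⟨x, hx⟩ := exists_not_mem hAne
  have : ((1 : A) : R) * x ∈ A := ((Ideal.eq_top_iff_one _).mp h) x
  rw [OneMemClass.coe_one, one_mul] at this
  exact hx this

lemma smul_one_coe (a : A) : a • (1 : R) = (a : R) := by
  rw [Algebra.smul_def, mul_one]; rfl

lemma smul_coe (a : A) (r : R) : a • r = (a : R) * r := by
  rw [Algebra.smul_def]; rfl

lemma finite_of_int (hmax : ∀ B : Subring R, A < B → B = ⊤) (hAne : A ≠ ⊤)
    (hint : ∀ r : R, IsIntegral A r) : Module.Finite A R := by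
  obtain ⟨x, hx⟩ := exists_not_mem hAne
  have hle : A ≤ (Algebra.adjoin A ({x} : Set R)).toSubring := fun a ha =>
    (Algebra.adjoin A ({x} : Set R)).algebraMap_mem ⟨a, ha⟩
  have htop : (Algebra.adjoin A ({x} : Set R)).toSubring = ⊤ :=
    top_of_mem hmax hle hx (Algebra.subset_adjoin rfl)
  have hfg : (Subalgebra.toSubmodule (Algebra.adjoin A ({x} : Set R))).FG :=
    (hint x).fg_adjoin_singleton
  constructor
  have heq : Subalgebra.toSubmodule (Algebra.adjoin A ({x} : Set R)) = ⊤ := by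
    ext r
    simp only [Subalgebra.mem_toSubmodule, Submodule.mem_top, iff_true]
    have : r ∈ (Algebra.adjoin A ({x} : Set R)).toSubring := htop ▸ Subring.mem_top r
    exact this
  rwa [heq] at hfg

lemma condA_max (hmax : ∀ B : Subring R, A < B → B = ⊤) (hAne : A ≠ ⊤)
    (hfin : Module.Finite A R) : (condA A).IsMaximal := by
  obtain ⟨m', hm', hle⟩ := Ideal.exists_le_maximal _ (condA_ne_top hAne)
  have hge : m' ≤ condA A := by
    intro b hb
    by_contra hbc
    rw [mem_condA] at hbc
    push_neg at hbc
    obtain ⟨r₁, hr₁⟩ := hbc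
    -- the subring A + bR is everything
    let B : Subring R :=
      { carrier := {r : R | ∃ a : A, ∃ s : R, r = (a : R) + (b : R) * s}
        one_mem' := ⟨1, 0, by simp⟩
        zero_mem' := ⟨0, 0, by simp⟩
        neg_mem' := by
          rintro r ⟨a, s, rfl⟩
          exact ⟨-a, -s, by push_cast; ring⟩
        add_mem' := by
          rintro r r' ⟨a, s, rfl⟩ ⟨a', s', rfl⟩
          exact ⟨a + a', s + s', by push_cast; ring⟩
        mul_mem' := by
          rintro r r' ⟨a, s, rfl⟩ ⟨a', s', rfl⟩
          exact ⟨a * a', (a : R) * s' + (a' : R) * s + (b : R) * s * s', by push_cast; ring⟩ }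
    have hAB : A ≤ B := fun a ha => ⟨⟨a, ha⟩, 0, by simp⟩
    have hBtop : B = ⊤ := top_of_mem hmax hAB hr₁ ⟨0, r₁, by simp⟩
    -- Nakayama on R / A
    set A₁ : Submodule A R := Submodule.span A ({1} : Set R) with hA₁
    set M := R ⧸ A₁ with hM
    set π : R →ₗ[A] M := A₁.mkQ with hπ
    have hsmul : ∀ mm : M, mm ∈ m' • (⊤ : Submodule A M) := by
      intro mm
      obtain ⟨r, rfl⟩ := Submodule.Quotient.mk_surjective A₁ mm
      obtain ⟨a, s, rfl⟩ : ∃ a : A, ∃ s : R, r = (a : R) + (b : R) * s := by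
        have : r ∈ B := by rw [hBtop]; trivial
        exact this
      have h1 : π ((a : R) + (b : R) * s) = b • π s := by
        rw [map_add]
        have ha0 : π (a : R) = 0 := by
          rw [Submodule.mkQ_apply, Submodule.Quotient.mk_eq_zero]
          exact Submodule.mem_span_singleton.mpr ⟨a, smul_one_coe a⟩
        have hbs : ((b : R) * s) = b • s := (smul_coe b s).symm
        rw [ha0, zero_add, hbs, map_smul]
      rw [Submodule.mkQ_apply] at h1
      rw [h1]
      exact Submodule.smul_mem_smul hb trivial
    obtain ⟨r₂, hr₂1, hr₂0⟩ :=
      Submodule.exists_sub_one_mem_and_smul_eq_zero_of_fg_of_le_smul m' ⊤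
        (Module.finite_def.mp inferInstance) (fun mm _ => hsmul mm)
    have hr₂c : r₂ ∈ condA A := by
      rw [mem_condA]
      intro s
      have := hr₂0 (π s) trivial
      rw [hπ, Submodule.mkQ_apply, ← Submodule.Quotient.mk_smul, Submodule.Quotient.mk_eq_zero] at this
      obtain ⟨a, ha⟩ := Submodule.mem_span_singleton.mp this
      rw [smul_one_coe] at ha
      rw [← smul_coe]
      exact ha ▸ a.2
    have : (1 : A) ∈ m' := by
      have h1 : (1 : A) = r₂ - (r₂ - 1) := by ring
      rw [h1]
      exact sub_mem (hle hr₂c) hr₂1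
    exact hm'.ne_top ((Ideal.eq_top_iff_one _).mpr this)
  rw [le_antisymm hle hge]
  exact hm'

set_option synthInstance.maxHeartbeats 800000 in
set_option maxHeartbeats 1600000 in
lemma caseII (hmax : ∀ B : Subring R, A < B → B = ⊤) (hAne : A ≠ ⊤)
    (hint : ∀ r : R, IsIntegral A r) :
    (∃ (n1 n2 : Ideal R), n1.IsMaximal ∧ n2.IsMaximal ∧ n1 ≠ n2 ∧
      ∃ σ : (R ⧸ n1) ≃+* (R ⧸ n2),
        (A : Set R) = {f : R | σ (Ideal.Quotient.mk n1 f) = Ideal.Quotient.mk n2 f}) ∨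
    (∃ n : Ideal R, n.IsMaximal ∧ ∃ δ : R →+ R ⧸ n,
      (∀ f g : R,
        δ (f * g) = Ideal.Quotient.mk n f * δ g + Ideal.Quotient.mk n g * δ f) ∧
      (∃ e ∈ n, δ e ≠ 0) ∧
      (A : Set R) = {f : R | δ f = 0}) ∨
    (∃ n : Ideal R, n.IsMaximal ∧ (n : Set R) ⊆ (A : Set R) ∧
      A.map (Ideal.Quotient.mk n) ≠ ⊤ ∧
      (∀ x ∈ A.map (Ideal.Quotient.mk n), x ≠ 0 →
        ∃ y ∈ A.map (Ideal.Quotient.mk n), x * y = 1) ∧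
      (∀ F' : Subring (R ⧸ n),
        (∀ x ∈ F', x ≠ 0 → ∃ y ∈ F', x * y = 1) →
        A.map (Ideal.Quotient.mk n) < F' → F' = ⊤)) := by
  classical
  have hfin : Module.Finite A R := finite_of_int hmax hAne hint
  have hcmax : (condA A).IsMaximal := condA_max hmax hAne hfin
  have hcne : cond A ≠ ⊤ := by
    intro h
    obtain ⟨x, hx⟩ := exists_not_mem hAne
    exact hx (cond_le (h ▸ Submodule.mem_top))
  by_cases hcm : (cond A).IsMaximal
  · -- case (c)
    right; right
    refine ⟨cond A, hcm, fun r hr => cond_le hr, ?_, ?_, ?_⟩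
    · -- image is not everything
      intro h
      obtain ⟨r₀, hr₀⟩ := exists_not_mem hAne
      have : Ideal.Quotient.mk (cond A) r₀ ∈ A.map (Ideal.Quotient.mk (cond A)) := by
        rw [h]; trivial
      obtain ⟨a, haA, hmk⟩ := Subring.mem_map.mp this
      have : a - r₀ ∈ cond A := Ideal.Quotient.eq.mp hmk
      have : r₀ = a - (a - r₀) := by ring
      rw [this] at hr₀
      exact hr₀ (sub_mem haA (cond_le ‹a - r₀ ∈ cond A›))
    · -- image is a subfield
      intro x hxm hx0
      obtain ⟨a, haA, rfl⟩ := Subring.mem_map.mp hxm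
      have hac : (⟨a, haA⟩ : A) ∉ condA A := by
        intro h
        exact hx0 (Ideal.Quotient.eq_zero_iff_mem.mpr h)
      obtain ⟨b, i₀, hi₀, hbi⟩ := hcmax.exists_inv hac
      refine ⟨Ideal.Quotient.mk (cond A) (b : R), Subring.mem_map.mpr ⟨(b : R), b.2, rfl⟩, ?_⟩
      rw [← map_mul, ← map_one (Ideal.Quotient.mk (cond A)), Ideal.Quotient.mk_eq_mk_iff_sub_mem]
      have hcoe : (b : R) * a + (i₀ : R) = 1 := by
        have := congrArg (Subtype.val) hbi
        push_cast at this
        exact this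
      have : a * (b : R) - 1 = -(i₀ : R) := by linear_combination hcoe
      rw [this]
      exact neg_mem hi₀
    · -- no intermediate subring at all
      intro F' _ hlt
      obtain ⟨z, hzF', hzm⟩ := SetLike.exists_of_lt hlt
      obtain ⟨r, rfl⟩ := Ideal.Quotient.mk_surjective z
      have hrA : r ∉ A := fun h => hzm (Subring.mem_map.mpr ⟨r, h, rfl⟩)
      have hB' : Subring.comap (Ideal.Quotient.mk (cond A)) F' = ⊤ := by
        refine top_of_mem hmax (fun a ha => ?_) hrA hzF'
        exact le_of_lt hlt (Subring.mem_map.mpr ⟨a, ha, rfl⟩)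
      rw [Subring.eq_top_iff']
      intro t
      obtain ⟨s, rfl⟩ := Ideal.Quotient.mk_surjective t
      have : s ∈ Subring.comap (Ideal.Quotient.mk (cond A)) F' := by rw [hB']; trivial
      exact this
  · -- the conductor is not maximal: cases (a) and (b)
    obtain ⟨n, hn, hcn⟩ := Ideal.exists_le_maximal _ hcne
    have hne : n ≠ cond A := fun h => hcm (h ▸ hn)
    -- n is not contained in A
    have hnsubA : ¬ (∀ r ∈ n, r ∈ A) := by
      intro h
      refine hne (le_antisymm (fun r hr => ?_) hcn)
      intro s
      exact h _ (Ideal.mul_mem_right s n hr)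
    push_neg at hnsubA
    obtain ⟨y, hy, hyA⟩ := hnsubA
    -- n ∩ A = conductor
    have hcomap : n.comap A.subtype = condA A := by
      refine (hcmax.eq_of_le ?_ ?_).symm
      · intro h
        have h1 : (1 : A) ∈ n.comap A.subtype := (Ideal.eq_top_iff_one _).mp h
        have : ((1 : A) : R) ∈ n := h1
        rw [OneMemClass.coe_one] at this
        exact hn.ne_top ((Ideal.eq_top_iff_one _).mpr this)
      · intro a ha
        exact hcn ha
    have hin_cond : ∀ a : A, (a : R) ∈ n → (a : R) ∈ cond A := by
      intro a ha
      have : a ∈ n.comap A.subtype := ha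
      rw [hcomap] at this
      exact this
    -- key inversion lemma
    have lem_inv : ∀ (bb : A) (w : R), w ∉ cond A → (bb : R) * w ∈ cond A →
        (bb : R) ∈ cond A := by
      intro bb w hw hbw
      by_contra hbc
      have hbb : bb ∉ condA A := hbc
      obtain ⟨s, i₀, hi₀, hsi⟩ := hcmax.exists_inv hbb
      have hcoe : (s : R) * (bb : R) + (i₀ : R) = 1 := by
        have := congrArg (Subtype.val) hsi
        push_cast at this
        exact this
      have hwid : w = (s : R) * ((bb : R) * w) + (i₀ : R) * w := by
        linear_combination w * hcoe.symm
      refine hw ?_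
      rw [hwid]
      exact add_mem (Ideal.mul_mem_left _ _ hbw) (Ideal.mul_mem_right _ _ (hi₀ : (i₀:R) ∈ cond A))
    -- R = A + n
    have hAn_dec : ∀ r : R, ∃ a : A, r - (a : R) ∈ n := by
      let Bn : Subring R :=
        { carrier := {r : R | ∃ a : A, r - (a : R) ∈ n}
          one_mem' := ⟨1, by simp⟩
          zero_mem' := ⟨0, by simp⟩
          neg_mem' := by
            rintro r ⟨a, ha⟩
            exact ⟨-a, by push_cast; rw [show -r - -(a:R) = -(r - (a:R)) by ring]; exact neg_mem ha⟩
          add_mem' := by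
            rintro r r' ⟨a, ha⟩ ⟨a', ha'⟩
            refine ⟨a + a', ?_⟩
            push_cast
            rw [show r + r' - ((a:R) + (a':R)) = (r - (a:R)) + (r' - (a':R)) by ring]
            exact add_mem ha ha'
          mul_mem' := by
            rintro r r' ⟨a, ha⟩ ⟨a', ha'⟩
            refine ⟨a * a', ?_⟩
            push_cast
            rw [show r * r' - (a:R) * (a':R) = r * (r' - (a':R)) + (a':R) * (r - (a:R)) by ring]
            exact add_mem (Ideal.mul_mem_left _ _ ha') (Ideal.mul_mem_left _ _ ha) }
      have hBtop : Bn = ⊤ :=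
        top_of_mem hmax (fun a ha => ⟨⟨a, ha⟩, by simp⟩) hyA ⟨0, by simpa using hy⟩
      intro r
      have : r ∈ Bn := by rw [hBtop]; trivial
      exact this
    by_cases h2 : ∀ w ∈ (n ^ 2 : Ideal R), w ∈ A
    · -- RAMIFIED : case (b)
      right; left
      have hn2c : ∀ w ∈ (n ^ 2 : Ideal R), w ∈ cond A := by
        intro w hw s
        exact h2 _ (Ideal.mul_mem_right s _ hw)
      have hee : y * y ∈ cond A := hn2c _ (by rw [pow_two]; exact Ideal.mul_mem_mul hy hy)
      have hyc : y ∉ cond A := fun h => hyA (cond_le h)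
      -- decomposition r = a + b y mod cond
      have hdec : ∀ r : R, ∃ a bb : A, r - (a : R) - (bb : R) * y ∈ cond A := by
        let B3 : Subring R :=
          { carrier := {r : R | ∃ a bb : A, r - (a : R) - (bb : R) * y ∈ cond A}
            one_mem' := ⟨1, 0, by push_cast; rw [show (1:R) - 1 - 0 * y = 0 by ring]; exact zero_mem _⟩
            zero_mem' := ⟨0, 0, by push_cast; rw [show (0:R) - 0 - 0 * y = 0 by ring]; exact zero_mem _⟩
            neg_mem' := by
              rintro r ⟨a, bb, h⟩
              refine ⟨-a, -bb, ?_⟩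
              push_cast
              rw [show -r - -(a:R) - -(bb:R) * y = -(r - (a:R) - (bb:R) * y) by ring]
              exact neg_mem h
            add_mem' := by
              rintro r r' ⟨a, bb, h⟩ ⟨a', bb', h'⟩
              refine ⟨a + a', bb + bb', ?_⟩
              push_cast
              rw [show r + r' - ((a:R) + (a':R)) - ((bb:R) + (bb':R)) * y
                = (r - (a:R) - (bb:R) * y) + (r' - (a':R) - (bb':R) * y) by ring]
              exact add_mem h h'
            mul_mem' := by
              rintro r r' ⟨a, bb, h⟩ ⟨a', bb', h'⟩
              refine ⟨a * a', a * bb' + a' * bb, ?_⟩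
              push_cast
              rw [show r * r' - (a:R) * (a':R) - ((a:R) * (bb':R) + (a':R) * (bb:R)) * y
                = (r' - (a':R) - (bb':R) * y) * r + (r - (a:R) - (bb:R) * y) * ((a':R) + (bb':R) * y)
                  + ((bb:R) * (bb':R)) * (y * y) by ring]
              refine add_mem (add_mem ?_ ?_) ?_
              · exact Ideal.mul_mem_right _ _ h'
              · exact Ideal.mul_mem_right _ _ h
              · exact Ideal.mul_mem_left _ _ hee }
        have hB3 : B3 = ⊤ := by
          refine top_of_mem hmax (fun a ha => ⟨⟨a, ha⟩, 0, ?_⟩) hyA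
            (⟨0, 1, by push_cast; rw [show y - 0 - 1 * y = 0 by ring]; exact zero_mem _⟩ :
              y ∈ B3)
          push_cast
          rw [show a - a - 0 * y = 0 by ring]
          exact zero_mem _
        intro r
        have : r ∈ B3 := by rw [hB3]; trivial
        exact this
      -- well-definedness
      have W : ∀ (r : R) (a bb a' bb' : A), r - (a : R) - (bb : R) * y ∈ cond A →
          r - (a' : R) - (bb' : R) * y ∈ cond A →
          Ideal.Quotient.mk n (bb : R) = Ideal.Quotient.mk n (bb' : R) := by
        intro r a bb a' bb' h h'
        have hdiff : ((a' : R) - (a : R)) + ((bb' : R) - (bb : R)) * y ∈ cond A := by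
          rw [show ((a' : R) - (a : R)) + ((bb' : R) - (bb : R)) * y
            = (r - (a:R) - (bb:R) * y) - (r - (a':R) - (bb':R) * y) by ring]
          exact sub_mem h h'
        have han : ((a' - a : A) : R) ∈ n := by
          push_cast
          rw [show (a' : R) - (a : R)
            = (((a' : R) - (a : R)) + ((bb' : R) - (bb : R)) * y) - ((bb' : R) - (bb : R)) * y
            by ring]
          exact sub_mem (hcn hdiff) (Ideal.mul_mem_left _ _ hy)
        have hac : ((a' - a : A) : R) ∈ cond A := hin_cond _ han
        have hbby : ((bb' - bb : A) : R) * y ∈ cond A := by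
          push_cast
          rw [show ((bb' : R) - (bb : R)) * y
            = (((a' : R) - (a : R)) + ((bb' : R) - (bb : R)) * y) - ((a' : R) - (a : R)) by ring]
          refine sub_mem hdiff ?_
          have := hac
          push_cast at this
          exact this
        have hbb : ((bb' - bb : A) : R) ∈ cond A := lem_inv _ _ hyc hbby
        rw [Ideal.Quotient.mk_eq_mk_iff_sub_mem]
        have : ((bb' - bb : A) : R) ∈ n := hcn hbb
        push_cast at this
        rw [show (bb : R) - (bb' : R) = -(((bb') : R) - (bb : R)) by ring]
        exact neg_mem this
      choose α β hαβ using hdec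
      -- δ as a function
      set δ₀ : R → R ⧸ n := fun r => Ideal.Quotient.mk n ((β r : A) : R) with hδ₀
      have hadd : ∀ r r' : R, δ₀ (r + r') = δ₀ r + δ₀ r' := by
        intro r r'
        have hwit : (r + r') - ((α r + α r' : A) : R) - ((β r + β r' : A) : R) * y ∈ cond A := by
          push_cast
          rw [show r + r' - ((α r : R) + (α r' : R)) - ((β r : R) + (β r' : R)) * y
            = (r - (α r : R) - (β r : R) * y) + (r' - (α r' : R) - (β r' : R) * y) by ring]
          exact add_mem (hαβ r) (hαβ r')
        have := W (r + r') _ _ _ _ (hαβ (r + r')) hwit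
        rw [hδ₀]
        simp only []
        rw [this]
        push_cast
        rw [map_add]
      set δ : R →+ R ⧸ n := AddMonoidHom.mk' δ₀ hadd with hδ
      have hδ_apply : ∀ r, δ r = Ideal.Quotient.mk n ((β r : A) : R) := fun r => rfl
      -- mk n r = mk n (α r)
      have hmkα : ∀ r : R, Ideal.Quotient.mk n r = Ideal.Quotient.mk n ((α r : A) : R) := by
        intro r
        rw [Ideal.Quotient.mk_eq_mk_iff_sub_mem]
        rw [show r - (α r : R) = (r - (α r : R) - (β r : R) * y) + (β r : R) * y by ring]
        exact add_mem (hcn (hαβ r)) (Ideal.mul_mem_left _ _ hy)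
      -- Leibniz rule
      have hleib : ∀ f g : R,
          δ (f * g) = Ideal.Quotient.mk n f * δ g + Ideal.Quotient.mk n g * δ f := by
        intro f g
        have hwit : f * g - ((α f * α g : A) : R) - ((α f * β g + α g * β f : A) : R) * y
            ∈ cond A := by
          push_cast
          rw [show f * g - (α f : R) * (α g : R)
              - ((α f : R) * (β g : R) + (α g : R) * (β f : R)) * y
            = (g - (α g : R) - (β g : R) * y) * f
              + (f - (α f : R) - (β f : R) * y) * ((α g : R) + (β g : R) * y)
              + ((β f : R) * (β g : R)) * (y * y) by ring]
          refine add_mem (add_mem ?_ ?_) ?_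
          · exact Ideal.mul_mem_right _ _ (hαβ g)
          · exact Ideal.mul_mem_right _ _ (hαβ f)
          · exact Ideal.mul_mem_left _ _ hee
        have hW := W (f * g) _ _ _ _ (hαβ (f * g)) hwit
        rw [hδ_apply, hδ_apply, hδ_apply, hW, hmkα f, hmkα g]
        push_cast
        simp only [map_add, map_mul]
      -- δ y = 1
      haveI : Nontrivial (R ⧸ n) := Ideal.Quotient.nontrivial_iff.mpr hn.ne_top
      have hδy : δ y = 1 := by
        have hwit : y - ((0 : A) : R) - ((1 : A) : R) * y ∈ cond A := by
          push_cast
          rw [show y - 0 - 1 * y = 0 by ring]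
          exact zero_mem _
        have hW := W y _ _ _ _ (hαβ y) hwit
        rw [hδ_apply, hW]
        push_cast
        exact map_one _
      have hδy0 : δ y ≠ 0 := by rw [hδy]; exact one_ne_zero
      -- A is contained in the kernel
      have hAker : ∀ a, a ∈ A → δ a = 0 := by
        intro a ha
        have hwit : a - ((⟨a, ha⟩ : A) : R) - ((0 : A) : R) * y ∈ cond A := by
          push_cast
          rw [show a - a - 0 * y = 0 by ring]
          exact zero_mem _
        have hW := W a _ _ _ _ (hαβ a) hwit
        rw [hδ_apply, hW]
        push_cast
        exact map_zero _
      -- the kernel is a subring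
      let E : Subring R :=
        { carrier := {f : R | δ f = 0}
          one_mem' := hAker 1 A.one_mem
          zero_mem' := map_zero δ
          neg_mem' := by
            intro f hf
            have : δ (-f) = -δ f := map_neg δ f
            rw [Set.mem_setOf_eq] at hf
            rw [Set.mem_setOf_eq, this, hf, neg_zero]
          add_mem' := by
            intro f g hf hg
            rw [Set.mem_setOf_eq] at hf hg
            rw [Set.mem_setOf_eq, map_add, hf, hg, add_zero]
          mul_mem' := by
            intro f g hf hg
            rw [Set.mem_setOf_eq] at hf hg
            rw [Set.mem_setOf_eq, hleib, hf, hg, mul_zero, mul_zero, add_zero] }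
      have hAE : A = E := by
        refine eq_of_max hmax (fun a ha => hAker a ha) ?_
        intro h
        have : y ∈ E := by rw [h]; trivial
        exact hδy0 this
      refine ⟨n, hn, δ, hleib, ⟨y, hy, hδy0⟩, ?_⟩
      rw [hAE]
      rfl
    · -- DECOMPOSED : case (a)
      left
      push_neg at h2
      obtain ⟨w, hw2, hwA⟩ := h2
      -- R = A + n^2
      have hS2 : ∀ r : R, ∃ a : A, r - (a : R) ∈ (n ^ 2 : Ideal R) := by
        let S2 : Subring R :=
          { carrier := {r : R | ∃ a : A, r - (a : R) ∈ (n ^ 2 : Ideal R)}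
            one_mem' := ⟨1, by simp⟩
            zero_mem' := ⟨0, by simp⟩
            neg_mem' := by
              rintro r ⟨a, ha⟩
              exact ⟨-a, by
                push_cast
                rw [show -r - -(a:R) = -(r - (a:R)) by ring]
                exact neg_mem ha⟩
            add_mem' := by
              rintro r r' ⟨a, ha⟩ ⟨a', ha'⟩
              refine ⟨a + a', ?_⟩
              push_cast
              rw [show r + r' - ((a:R) + (a':R)) = (r - (a:R)) + (r' - (a':R)) by ring]
              exact add_mem ha ha'
            mul_mem' := by
              rintro r r' ⟨a, ha⟩ ⟨a', ha'⟩
              refine ⟨a * a', ?_⟩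
              push_cast
              rw [show r * r' - (a:R) * (a':R) = r * (r' - (a':R)) + (a':R) * (r - (a:R)) by ring]
              exact add_mem (Ideal.mul_mem_left _ _ ha') (Ideal.mul_mem_left _ _ ha) }
        have hBtop : S2 = ⊤ :=
          top_of_mem hmax (fun a ha => ⟨⟨a, ha⟩, by simp⟩) hwA ⟨0, by simpa using hw2⟩
        intro r
        have : r ∈ S2 := by rw [hBtop]; trivial
        exact this
      -- quotient ring T := R / cond A
      set mkC := Ideal.Quotient.mk (cond A) with hmkC
      set N' : Ideal (R ⧸ (cond A)) := n.map mkC with hN'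
      -- N' ≤ N' * N'
      have hNN : N' ≤ N' * N' := by
        intro t ht
        rw [hN'] at ht
        obtain ⟨r, hr, rfl⟩ := (Ideal.mem_map_iff_of_surjective mkC
          Ideal.Quotient.mk_surjective).mp ht
        obtain ⟨a, ha⟩ := hS2 r
        have haR : (a : R) ∈ n := by
          rw [show (a : R) = r - (r - (a : R)) by ring]
          exact sub_mem hr (Ideal.pow_le_self (by norm_num) ha)
        have hac : (a : R) ∈ cond A := hin_cond a haR
        have hmkr : mkC r = mkC (r - (a : R)) := by
          rw [Ideal.Quotient.mk_eq_mk_iff_sub_mem]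
          rw [show r - (r - (a : R)) = (a : R) by ring]
          exact hac
        rw [hmkr, ← Ideal.map_mul]
        rw [← pow_two]
        exact Ideal.mem_map_of_mem mkC ha
      -- T is Noetherian
      haveI hcmax' : (condA A).IsMaximal := hcmax
      letI : Field (A ⧸ condA A) := Ideal.Quotient.field _
      set φ : (A ⧸ condA A) →+* (R ⧸ (cond A)) := Ideal.quotientMap (cond A) A.subtype le_rfl
        with hφ
      letI : Algebra (A ⧸ condA A) (R ⧸ (cond A)) := φ.toAlgebra
      haveI : Module.Finite (A ⧸ condA A) (R ⧸ (cond A)) := by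
        obtain ⟨s, hs⟩ := hfin.fg_top
        constructor
        refine ⟨s.image mkC, ?_⟩
        rw [Finset.coe_image]
        rw [Submodule.eq_top_iff']
        intro t
        obtain ⟨r, rfl⟩ := Ideal.Quotient.mk_surjective t
        have hr : r ∈ Submodule.span A (s : Set R) := by rw [hs]; trivial
        refine Submodule.span_induction ?_ ?_ ?_ ?_ hr
        · intro z hz
          exact Submodule.subset_span ⟨z, hz, rfl⟩
        · rw [map_zero]
          exact zero_mem _
        · intro u v _ _ hu hv
          rw [map_add]
          exact add_mem hu hv
        · intro a u _ hu
          have : mkC (a • u) = (Ideal.Quotient.mk (condA A) a) • mkC u := by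
            rw [smul_coe, map_mul]
            have : φ (Ideal.Quotient.mk (condA A) a) = mkC ((a : A) : R) :=
              Ideal.quotientMap_mk
            rw [Algebra.smul_def]
            show mkC ((a : R)) * mkC u = φ (Ideal.Quotient.mk (condA A) a) * mkC u
            rw [this]
          rw [this]
          exact Submodule.smul_mem _ _ hu
      haveI hNoeA : IsNoetherian (A ⧸ condA A) (R ⧸ (cond A)) :=
        isNoetherian_of_isNoetherianRing_of_finite (A ⧸ condA A) (R ⧸ (cond A))
      haveI hNoeT : IsNoetherian (R ⧸ (cond A)) (R ⧸ (cond A)) :=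
        isNoetherian_of_tower (A ⧸ condA A) hNoeA
      have hfgN : (N' : Submodule (R ⧸ (cond A)) (R ⧸ (cond A))).FG := IsNoetherian.noetherian N'
      -- Nakayama idempotent
      obtain ⟨r', hr'1, hr'0⟩ :=
        Submodule.exists_sub_one_mem_and_smul_eq_zero_of_fg_of_le_smul N' N' hfgN
          (by rw [Ideal.smul_eq_mul]; exact hNN)
      set ebar : R ⧸ (cond A) := 1 - r' with hebar
      have hebarN : ebar ∈ N' := by
        rw [hebar, show (1 : R ⧸ (cond A)) - r' = -(r' - 1) by ring]
        exact neg_mem hr'1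
      have hid : ∀ t ∈ N', ebar * t = t := by
        intro t ht
        have := hr'0 t ht
        rw [smul_eq_mul] at this
        rw [hebar]
        ring_nf
        rw [mul_comm] at this
        linear_combination -this
      have heid : ebar * ebar = ebar := hid ebar hebarN
      have hyN : mkC y ∈ N' := Ideal.mem_map_of_mem mkC hy
      have hyc : y ∉ cond A := fun h => hyA (cond_le h)
      have hymk : mkC y ≠ 0 := by
        intro h
        exact hyc (Ideal.Quotient.eq_zero_iff_mem.mp h)
      have hebar0 : ebar ≠ 0 := by
        intro h
        have := hid (mkC y) hyN
        rw [h, zero_mul] at this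
        exact hymk this.symm
      -- lift the idempotent
      obtain ⟨e, hen, hemk⟩ := (Ideal.mem_map_iff_of_surjective mkC
        Ideal.Quotient.mk_surjective).mp hebarN
      have hec : e ∉ cond A := by
        intro h
        exact hebar0 (hemk ▸ Ideal.Quotient.eq_zero_iff_mem.mpr h)
      have heA : e ∉ A := fun h => hec (hin_cond ⟨e, h⟩ hen)
      have hee' : e * e - e ∈ cond A := by
        have : mkC (e * e - e) = 0 := by
          rw [map_sub, map_mul, hemk, heid, sub_self]
        exact Ideal.Quotient.eq_zero_iff_mem.mp this
      -- decomposition r = a + b e mod cond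
      have hdec4 : ∀ r : R, ∃ a bb : A, r - (a : R) - (bb : R) * e ∈ cond A := by
        let B4 : Subring R :=
          { carrier := {r : R | ∃ a bb : A, r - (a : R) - (bb : R) * e ∈ cond A}
            one_mem' := ⟨1, 0, by push_cast; rw [show (1:R) - 1 - 0 * e = 0 by ring]; exact zero_mem _⟩
            zero_mem' := ⟨0, 0, by push_cast; rw [show (0:R) - 0 - 0 * e = 0 by ring]; exact zero_mem _⟩
            neg_mem' := by
              rintro r ⟨a, bb, h⟩
              refine ⟨-a, -bb, ?_⟩
              push_cast
              rw [show -r - -(a:R) - -(bb:R) * e = -(r - (a:R) - (bb:R) * e) by ring]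
              exact neg_mem h
            add_mem' := by
              rintro r r' ⟨a, bb, h⟩ ⟨a', bb', h'⟩
              refine ⟨a + a', bb + bb', ?_⟩
              push_cast
              rw [show r + r' - ((a:R) + (a':R)) - ((bb:R) + (bb':R)) * e
                = (r - (a:R) - (bb:R) * e) + (r' - (a':R) - (bb':R) * e) by ring]
              exact add_mem h h'
            mul_mem' := by
              rintro r r' ⟨a, bb, h⟩ ⟨a', bb', h'⟩
              refine ⟨a * a', a * bb' + a' * bb + bb * bb', ?_⟩
              push_cast
              rw [show r * r' - (a:R) * (a':R)
                  - ((a:R) * (bb':R) + (a':R) * (bb:R) + (bb:R) * (bb':R)) * e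
                = (r' - (a':R) - (bb':R) * e) * r
                  + (r - (a:R) - (bb:R) * e) * ((a':R) + (bb':R) * e)
                  + ((bb:R) * (bb':R)) * (e * e - e) by ring]
              refine add_mem (add_mem ?_ ?_) ?_
              · exact Ideal.mul_mem_right _ _ h'
              · exact Ideal.mul_mem_right _ _ h
              · exact Ideal.mul_mem_left _ _ hee' }
        have hB4 : B4 = ⊤ := by
          refine top_of_mem hmax (fun a ha => ⟨⟨a, ha⟩, 0, ?_⟩) heA
            (⟨0, 1, by push_cast; rw [show e - 0 - 1 * e = 0 by ring]; exact zero_mem _⟩ :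
              e ∈ B4)
          push_cast
          rw [show a - a - 0 * e = 0 by ring]
          exact zero_mem _
        intro r
        have : r ∈ B4 := by rw [hB4]; trivial
        exact this
      -- the second maximal ideal
      let n₂ : Ideal R :=
        { carrier := {r : R | r * e ∈ cond A}
          add_mem' := by
            intro a b ha hb
            rw [Set.mem_setOf_eq, add_mul]
            exact add_mem ha hb
          zero_mem' := by
            rw [Set.mem_setOf_eq, zero_mul]
            exact zero_mem _
          smul_mem' := by
            intro c r hr
            rw [Set.mem_setOf_eq] at hr
            rw [Set.mem_setOf_eq, smul_eq_mul, mul_assoc]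
            exact Ideal.mul_mem_left _ _ hr }
      have hmemn₂ : ∀ r : R, r ∈ n₂ ↔ r * e ∈ cond A := fun r => Iff.rfl
      have hcn₂ : cond A ≤ n₂ := fun r hr => Ideal.mul_mem_right e _ hr
      have hen₂ : e ∉ n₂ := by
        intro h
        rw [hmemn₂] at h
        refine hec ?_
        rw [show e = e * e - (e * e - e) by ring]
        exact sub_mem h hee'
      have he1n₂ : e - 1 ∈ n₂ := by
        rw [hmemn₂, show (e - 1) * e = e * e - e by ring]
        exact hee'
      have h1n₂ : (1 : R) ∉ n₂ := by
        intro h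
        rw [hmemn₂, one_mul] at h
        exact hec h
      have hAn₂c : ∀ a : A, (a : R) ∈ n₂ → (a : R) ∈ cond A := by
        intro a ha
        exact lem_inv a e hec ((hmemn₂ _).mp ha)
      -- surjections from A onto both residue fields
      set ψ₁ : A →+* R ⧸ n := (Ideal.Quotient.mk n).comp A.subtype with hψ₁
      set ψ₂ : A →+* R ⧸ n₂ := (Ideal.Quotient.mk n₂).comp A.subtype with hψ₂
      have hψ₁surj : Function.Surjective ψ₁ := by
        intro t
        obtain ⟨r, rfl⟩ := Ideal.Quotient.mk_surjective t
        obtain ⟨a, ha⟩ := hAn_dec r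
        refine ⟨a, ?_⟩
        show Ideal.Quotient.mk n (a : R) = Ideal.Quotient.mk n r
        rw [Ideal.Quotient.mk_eq_mk_iff_sub_mem, show (a : R) - r = -(r - (a : R)) by ring]
        exact neg_mem ha
      have hψ₂surj : Function.Surjective ψ₂ := by
        intro t
        obtain ⟨r, rfl⟩ := Ideal.Quotient.mk_surjective t
        obtain ⟨a, bb, hab⟩ := hdec4 r
        refine ⟨a + bb, ?_⟩
        show Ideal.Quotient.mk n₂ ((a + bb : A) : R) = Ideal.Quotient.mk n₂ r
        rw [Ideal.Quotient.mk_eq_mk_iff_sub_mem]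
        push_cast
        rw [show (a : R) + (bb : R) - r
          = -((r - (a : R) - (bb : R) * e) + (bb : R) * (e - 1)) by ring]
        exact neg_mem (add_mem (hcn₂ hab) (Ideal.mul_mem_left _ _ he1n₂))
      have hker₁ : RingHom.ker ψ₁ = condA A := by
        ext a
        rw [RingHom.mem_ker]
        show Ideal.Quotient.mk n (a : R) = 0 ↔ _
        rw [Ideal.Quotient.eq_zero_iff_mem]
        constructor
        · intro h
          exact hin_cond a h
        · intro h
          exact hcn h
      have hker₂ : RingHom.ker ψ₂ = condA A := by
        ext a
        rw [RingHom.mem_ker]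
        show Ideal.Quotient.mk n₂ (a : R) = 0 ↔ _
        rw [Ideal.Quotient.eq_zero_iff_mem]
        constructor
        · intro h
          exact hAn₂c a h
        · intro h
          exact hcn₂ h
      have hkers : RingHom.ker ψ₁ = RingHom.ker ψ₂ := hker₁.trans hker₂.symm
      set E₁ := RingHom.quotientKerEquivOfSurjective hψ₁surj with hE₁
      set E₂ := RingHom.quotientKerEquivOfSurjective hψ₂surj with hE₂
      -- n₂ is maximal
      haveI : (RingHom.ker ψ₂).IsMaximal := by rw [hker₂]; exact hcmax
      letI : Field (A ⧸ RingHom.ker ψ₂) := Ideal.Quotient.field _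
      have hisf : IsField (R ⧸ n₂) :=
        MulEquiv.isField (Field.toIsField (A ⧸ RingHom.ker ψ₂)) E₂.symm.toMulEquiv
      have hn₂max : n₂.IsMaximal := Ideal.Quotient.maximal_of_isField _ hisf
      have hnn₂ : n ≠ n₂ := by
        intro h
        exact hen₂ (h ▸ hen)
      -- the gluing isomorphism
      set σ : (R ⧸ n) ≃+* (R ⧸ n₂) :=
        E₁.symm.trans ((Ideal.quotEquivOfEq hkers).trans E₂) with hσ
      have hσa : ∀ a : A, σ (Ideal.Quotient.mk n (a : R)) = Ideal.Quotient.mk n₂ (a : R) := by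
        intro a
        have h1 : Ideal.Quotient.mk n (a : R) = E₁ (Ideal.Quotient.mk (RingHom.ker ψ₁) a) := by
          show ψ₁ a = E₁ (Ideal.Quotient.mk (RingHom.ker ψ₁) a)
          rw [hE₁]
          exact (RingHom.kerLift_mk ψ₁ a).symm
        rw [hσ, h1]
        simp only [RingEquiv.coe_trans, Function.comp_apply, RingEquiv.symm_apply_apply]
        rw [Ideal.quotEquivOfEq_mk]
        rw [hE₂]
        exact RingHom.kerLift_mk ψ₂ a
      haveI : Nontrivial (R ⧸ n₂) := Ideal.Quotient.nontrivial_iff.mpr (fun h =>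
        h1n₂ (h ▸ Submodule.mem_top))
      set E : Subring R := RingHom.eqLocus (σ.toRingHom.comp (Ideal.Quotient.mk n))
        (Ideal.Quotient.mk n₂) with hE
      have hAle : A ≤ E := by
        intro a ha
        show σ (Ideal.Quotient.mk n a) = Ideal.Quotient.mk n₂ a
        exact hσa ⟨a, ha⟩
      have heE : e ∉ E := by
        intro h
        have h' : σ (Ideal.Quotient.mk n e) = Ideal.Quotient.mk n₂ e := h
        rw [Ideal.Quotient.eq_zero_iff_mem.mpr hen, map_zero] at h'
        have h1 : Ideal.Quotient.mk n₂ e = 1 := by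
          rw [← map_one (Ideal.Quotient.mk n₂), Ideal.Quotient.mk_eq_mk_iff_sub_mem]
          exact he1n₂
        rw [h1] at h'
        have h0 : (0 : R ⧸ n₂) ≠ 1 := zero_ne_one' (R ⧸ n₂)
        exact h0 h'
      have hAE : A = E := eq_of_max hmax hAle (fun h => heE (h ▸ Subring.mem_top e))
      refine ⟨n, n₂, hn, hn₂max, hnn₂, σ, ?_⟩
      rw [hAE]
      rfl

end CaseII

end MaxSub




theorem classification_nonextending_maximal_subrings {R : Type*} [CommRing R]
    (A : Subring R) (hA : IsMaximalSubring A)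
    (hsurj : Function.Surjective (PrimeSpectrum.comap A.subtype)) :
    -- (a) glueing two closed points transversally
    (∃ (n1 n2 : Ideal R), n1.IsMaximal ∧ n2.IsMaximal ∧ n1 ≠ n2 ∧
      ∃ σ : (R ⧸ n1) ≃+* (R ⧸ n2),
        (A : Set R) = {f : R | σ (Ideal.Quotient.mk n1 f) = Ideal.Quotient.mk n2 f}) ∨
    -- (b) deleting a tangent direction
    (∃ n : Ideal R, n.IsMaximal ∧ ∃ δ : R →+ R ⧸ n,
      (∀ f g : R,
        δ (f * g) = Ideal.Quotient.mk n f * δ g + Ideal.Quotient.mk n g * δ f) ∧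
      (∃ e ∈ n, δ e ≠ 0) ∧
      (A : Set R) = {f : R | δ f = 0}) ∨
    -- (c) shrinking the residue field: the image `F` of `A` in `R/𝔫` is a subfield
    -- (a subring closed under inverses of its nonzero elements), `F ≠ R/𝔫` and
    -- there is no subfield strictly between `F` and `R/𝔫`
    (∃ n : Ideal R, n.IsMaximal ∧ (n : Set R) ⊆ (A : Set R) ∧
      A.map (Ideal.Quotient.mk n) ≠ ⊤ ∧
      (∀ x ∈ A.map (Ideal.Quotient.mk n), x ≠ 0 →
        ∃ y ∈ A.map (Ideal.Quotient.mk n), x * y = 1) ∧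
      (∀ F' : Subring (R ⧸ n),
        (∀ x ∈ F', x ≠ 0 → ∃ y ∈ F', x * y = 1) →
        A.map (Ideal.Quotient.mk n) < F' → F' = ⊤)) := by
  obtain ⟨hAne, hmax⟩ := hA
  by_cases hic : ∀ r : R, IsIntegral A r → r ∈ A
  · exact (MaxSub.caseI hmax hAne hic hsurj).elim
  · push_neg at hic
    obtain ⟨r₀, hri, hrA⟩ := hic
    have hle : A ≤ (integralClosure A R).toSubring := fun a ha =>
      (integralClosure A R).algebraMap_mem ⟨a, ha⟩
    have hr₀mem : r₀ ∈ (integralClosure A R).toSubring := hri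
    have htop : (integralClosure A R).toSubring = ⊤ :=
      MaxSub.top_of_mem hmax hle hrA hr₀mem
    have hint : ∀ r : R, IsIntegral A r := fun r => by
      have : r ∈ (integralClosure A R).toSubring := htop ▸ Subring.mem_top r
      exact this
    exact MaxSub.caseII hmax hAne hint
end

section
/- Let C be a Noetherian integral domain whose fraction field Q(C) is not finitely generated as a C-algebra. Let A be a maximal subring of the polynomial ring C[y] with C ⊆ A, and let 𝔪 be a maximal ideal of A such that the ideal generated by 𝔪 in C[y] is all of C[y]. Then 𝔪 ∩ C ≠ 0. -/
set_option maxHeartbeats 1000000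
set_option synthInstance.maxHeartbeats 1000000

open Polynomial

section Aux

variable {C : Type*} [CommRing C] [IsDomain C]

noncomputable def phiC (C : Type*) [CommRing C] [IsDomain C] :
    Polynomial C →+* Polynomial (FractionRing C) :=
  Polynomial.mapRingHom (algebraMap C (FractionRing C))

lemma phiC_injective : Function.Injective (phiC C) :=
  Polynomial.map_injective _ (IsFractionRing.injective C (FractionRing C))

noncomputable def Bsub (A : Subring (Polynomial C))
    (hCA : ∀ c : C, Polynomial.C c ∈ A) : Subring (Polynomial (FractionRing C)) where
  carrier := {p | ∃ s : C, s ≠ 0 ∧ ∃ a : ↥A,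
    Polynomial.C (algebraMap C (FractionRing C) s) * p = phiC C ↑a}
  one_mem' := ⟨1, one_ne_zero, 1, by simp⟩
  zero_mem' := ⟨1, one_ne_zero, 0, by simp⟩
  mul_mem' := by
    rintro p q ⟨s, hs, a, ha⟩ ⟨t, ht, b, hb⟩
    refine ⟨s * t, mul_ne_zero hs ht, a * b, ?_⟩
    have : Polynomial.C (algebraMap C (FractionRing C) (s * t)) * (p * q)
        = (Polynomial.C (algebraMap C (FractionRing C) s) * p)
          * (Polynomial.C (algebraMap C (FractionRing C) t) * q) := by
      rw [map_mul, map_mul]; ring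
    rw [this, ha, hb, Subring.coe_mul, map_mul]
  add_mem' := by
    rintro p q ⟨s, hs, a, ha⟩ ⟨t, ht, b, hb⟩
    refine ⟨s * t, mul_ne_zero hs ht,
      ⟨Polynomial.C t, hCA t⟩ * a + ⟨Polynomial.C s, hCA s⟩ * b, ?_⟩
    have h1 : Polynomial.C (algebraMap C (FractionRing C) (s * t)) * (p + q)
        = Polynomial.C (algebraMap C (FractionRing C) t)
            * (Polynomial.C (algebraMap C (FractionRing C) s) * p)
          + Polynomial.C (algebraMap C (FractionRing C) s)
            * (Polynomial.C (algebraMap C (FractionRing C) t) * q) := by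
      rw [map_mul, map_mul]; ring
    rw [h1, ha, hb, Subring.coe_add, Subring.coe_mul, Subring.coe_mul, map_add,
      map_mul, map_mul]
    show _ = phiC C (Polynomial.C t) * _ + phiC C (Polynomial.C s) * _
    simp only [phiC, Polynomial.coe_mapRingHom, Polynomial.map_C]
  neg_mem' := by
    rintro p ⟨s, hs, a, ha⟩
    exact ⟨s, hs, -a, by rw [Subring.coe_neg, map_neg, ← ha]; ring⟩

variable (A : Subring (Polynomial C)) (hCA : ∀ c : C, Polynomial.C c ∈ A)

lemma mem_Bsub_of_A (a : ↥A) : phiC C ↑a ∈ Bsub A hCA :=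
  ⟨1, one_ne_zero, a, by simp⟩

lemma constK_mem_Bsub (q : FractionRing C) : Polynomial.C q ∈ Bsub A hCA := by
  obtain ⟨⟨c, s⟩, hcs⟩ := IsLocalization.surj (nonZeroDivisors C) q
  refine ⟨(s : C), nonZeroDivisors.ne_zero s.2, ⟨Polynomial.C c, hCA c⟩, ?_⟩
  show Polynomial.C _ * Polynomial.C q = phiC C (Polynomial.C c)
  rw [← Polynomial.C_mul, mul_comm, hcs]
  simp [phiC]

noncomputable def psiAB : ↥A →+* ↥(Bsub A hCA) where
  toFun a := ⟨phiC C ↑a, mem_Bsub_of_A A hCA a⟩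
  map_one' := by ext; simp
  map_mul' a b := by ext; simp
  map_zero' := by ext; simp
  map_add' a b := by ext; simp

noncomputable def toBconst : FractionRing C →+* ↥(Bsub A hCA) where
  toFun q := ⟨Polynomial.C q, constK_mem_Bsub A hCA q⟩
  map_one' := by ext; simp
  map_mul' a b := by ext; simp
  map_zero' := by ext; simp
  map_add' a b := by ext; simp


/-- The extension of an ideal `m ⊆ A` to `S⁻¹A`, described by denominators. -/
noncomputable def Tid (m : Ideal ↥A) : Ideal ↥(Bsub A hCA) where
  carrier := {b | ∃ s : C, s ≠ 0 ∧ ∃ a : ↥A, a ∈ m ∧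
    Polynomial.C (algebraMap C (FractionRing C) s) * (b : Polynomial (FractionRing C)) = phiC C ↑a}
  zero_mem' := ⟨1, one_ne_zero, 0, m.zero_mem, by simp⟩
  add_mem' := by
    intro x y hx hy
    obtain ⟨s, hs, a, ham, ha⟩ := hx
    obtain ⟨t, ht, b, hbm, hb⟩ := hy
    refine ⟨s * t, mul_ne_zero hs ht,
      ⟨Polynomial.C t, hCA t⟩ * a + ⟨Polynomial.C s, hCA s⟩ * b,
      m.add_mem (m.mul_mem_left _ ham) (m.mul_mem_left _ hbm), ?_⟩
    have h1 : Polynomial.C (algebraMap C (FractionRing C) (s * t)) * ((x + y : ↥(Bsub A hCA)) : Polynomial (FractionRing C))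
        = Polynomial.C (algebraMap C (FractionRing C) t)
            * (Polynomial.C (algebraMap C (FractionRing C) s) * (x : Polynomial (FractionRing C)))
          + Polynomial.C (algebraMap C (FractionRing C) s)
            * (Polynomial.C (algebraMap C (FractionRing C) t) * (y : Polynomial (FractionRing C))) := by
      rw [map_mul, map_mul, Subring.coe_add]; ring
    rw [h1, ha, hb, Subring.coe_add, Subring.coe_mul, Subring.coe_mul, map_add,
      map_mul, map_mul]
    show _ = phiC C (Polynomial.C t) * _ + phiC C (Polynomial.C s) * _
    simp only [phiC, Polynomial.coe_mapRingHom, Polynomial.map_C]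
  smul_mem' := by
    intro c x hx
    obtain ⟨s, hs, a, ham, ha⟩ := hx
    obtain ⟨s₀, hs₀, a₀, ha₀⟩ := c.2
    refine ⟨s₀ * s, mul_ne_zero hs₀ hs, a₀ * a, m.mul_mem_left _ ham, ?_⟩
    have h1 : Polynomial.C (algebraMap C (FractionRing C) (s₀ * s)) * ((c • x : ↥(Bsub A hCA)) : Polynomial (FractionRing C))
        = (Polynomial.C (algebraMap C (FractionRing C) s₀) * (c : Polynomial (FractionRing C)))
          * (Polynomial.C (algebraMap C (FractionRing C) s) * (x : Polynomial (FractionRing C))) := by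
      rw [map_mul, map_mul]
      show _ * ((c : Polynomial (FractionRing C)) * (x : Polynomial (FractionRing C))) = _
      ring
    rw [h1, ha₀, ha, Subring.coe_mul, map_mul]

lemma mem_Tid {m : Ideal ↥A} {b : ↥(Bsub A hCA)} :
    b ∈ Tid A hCA m ↔ ∃ s : C, s ≠ 0 ∧ ∃ a : ↥A, a ∈ m ∧
      Polynomial.C (algebraMap C (FractionRing C) s) * (b : Polynomial (FractionRing C)) = phiC C ↑a := by
  rfl

end Aux


theorem crucial_ideal_meets_coefficients
    {C : Type*} [CommRing C] [IsDomain C] [IsNoetherianRing C]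
    (hQ : ¬ Algebra.FiniteType C (FractionRing C))
    (A : Subring (Polynomial C))
    (hCA : ∀ c : C, Polynomial.C c ∈ A)
    (hmax : IsMaximalSubring A)
    (m : Ideal ↥A) (hm : m.IsMaximal)
    (hext : Ideal.map A.subtype m = ⊤) :
    ∃ f : ↥A, f ∈ m ∧ ∃ c : C, c ≠ 0 ∧ (f : Polynomial C) = Polynomial.C c := by
  classical
  by_contra hgoal
  push_neg at hgoal
  -- hgoal : ∀ f, f ∈ m → ∀ c, c ≠ 0 → ↑f ≠ C c
  set K := FractionRing C with hK
  set φ := phiC C with hφ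
  set B := Bsub A hCA with hBdef
  -- m is nonzero
  have hmbot : m ≠ ⊥ := by
    intro h
    rw [h, Ideal.map_bot] at hext
    have : (1 : Polynomial C) ∈ (⊥ : Ideal (Polynomial C)) := hext ▸ trivial
    simpa using this
  obtain ⟨f, hfm, hf0⟩ := (Submodule.ne_bot_iff m).mp hmbot
  have hfv0 : (f : Polynomial C) ≠ 0 := fun h => hf0 (Subtype.ext h)
  have hd : 1 ≤ (f : Polynomial C).natDegree := by
    by_contra hlt
    push_neg at hlt
    have h0 : (f : Polynomial C).natDegree = 0 := by omega
    obtain ⟨c, hc⟩ := Polynomial.natDegree_eq_zero.mp h0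
    have hcne : c ≠ 0 := by
      rintro rfl
      rw [map_zero] at hc
      exact hfv0 hc.symm
    exact hgoal f hfm c hcne hc.symm
  -- the monic image polynomial
  have hg0 : φ (f : Polynomial C) ≠ 0 := fun h => hfv0 (phiC_injective (by simpa using h))
  set g' : Polynomial K := φ ↑f * Polynomial.C (φ ↑f).leadingCoeff⁻¹ with hg'def
  have hg'monic : g'.Monic := Polynomial.monic_mul_leadingCoeff_inv hg0
  have hg'deg : 1 ≤ g'.natDegree := by
    have hlc : (φ ↑f).leadingCoeff⁻¹ ≠ 0 :=
      inv_ne_zero (Polynomial.leadingCoeff_ne_zero.mpr hg0)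
    rw [hg'def, Polynomial.natDegree_mul hg0 (by simpa using hlc),
      Polynomial.natDegree_C, add_zero]
    have : (φ ↑f).natDegree = (f : Polynomial C).natDegree := by
      rw [hφ]
      exact Polynomial.natDegree_map_eq_of_injective
        (IsFractionRing.injective C (FractionRing C)) _
    omega
  have hg'B : g' ∈ B :=
    B.mul_mem (mem_Bsub_of_A A hCA f) (constK_mem_Bsub A hCA _)
  -- X is integral over B
  set toB : K →+* ↥B := toBconst A hCA with htoB
  set P : Polynomial ↥B := g'.map toB - Polynomial.C (⟨g', hg'B⟩ : ↥B) with hPdef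
  have hmapmonic : (g'.map toB).Monic := hg'monic.map toB
  have hPmonic : P.Monic := by
    rw [hPdef, sub_eq_add_neg]
    refine hmapmonic.add_of_left ?_
    rw [Polynomial.degree_neg]
    calc (Polynomial.C (⟨g', hg'B⟩ : ↥B)).degree ≤ 0 := Polynomial.degree_C_le
      _ < (g'.map toB).degree := by
        rw [hg'monic.degree_map]
        exact Polynomial.natDegree_pos_iff_degree_pos.mp (by omega)
  have haev : Polynomial.aeval (X : Polynomial K) P = 0 := by
    have h1 : Polynomial.aeval (X : Polynomial K) (g'.map toB) = g' := by
      rw [Polynomial.aeval_def, Polynomial.eval₂_map]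
      have hc : (algebraMap ↥B (Polynomial K)).comp toB
          = (Polynomial.C : K →+* Polynomial K) := RingHom.ext fun q => rfl
      rw [hc, Polynomial.eval₂_C_X]
    have h2 : Polynomial.aeval (X : Polynomial K) (Polynomial.C (⟨g', hg'B⟩ : ↥B)) = g' := by
      rw [Polynomial.aeval_C]; rfl
    rw [hPdef, map_sub, h1, h2, sub_self]
  have hXint : IsIntegral ↥B (X : Polynomial K) :=
    ⟨P, hPmonic, by rw [← Polynomial.aeval_def]; exact haev⟩
  -- B[X] = K[y]
  have hadj : Algebra.adjoin ↥B ({(X : Polynomial K)} : Set (Polynomial K)) = ⊤ := by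
    rw [eq_top_iff]
    intro p hp
    clear hp
    induction p using Polynomial.induction_on with
    | C c =>
        exact Subalgebra.algebraMap_mem _ (toB c)
    | add p q hp hq => exact add_mem hp hq
    | monomial n c ih =>
        have := mul_mem ih (Algebra.subset_adjoin (Set.mem_singleton (X : Polynomial K)))
        simpa [pow_succ, mul_assoc] using this
  haveI hfin : Module.Finite ↥B (Polynomial K) := by
    have hfg := hXint.fg_adjoin_singleton
    rw [hadj] at hfg
    exact ⟨by rwa [Algebra.top_toSubmodule] at hfg⟩
  haveI hint : Algebra.IsIntegral ↥B (Polynomial K) := Algebra.IsIntegral.of_finite _ _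
  -- the extension of m to B
  set J : Ideal ↥B := Ideal.map (psiAB A hCA) m with hJdef
  have hsubB : algebraMap ↥B (Polynomial K) = B.subtype := rfl
  have hJext : Ideal.map (Subring.subtype B) J = ⊤ := by
    rw [hJdef, Ideal.map_map]
    have hcomp : (B.subtype).comp (psiAB A hCA) = φ.comp A.subtype := RingHom.ext fun a => rfl
    rw [hcomp, ← Ideal.map_map, hext, Ideal.map_top]
  have hJtop : J = ⊤ := by
    by_contra hJ
    obtain ⟨n, hnmax, hJn⟩ := Ideal.exists_le_maximal J hJ
    obtain ⟨q, hqmax, hqcomap⟩ := Ideal.exists_ideal_over_maximal_of_isIntegral n (by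
      rw [hsubB]
      have : RingHom.ker B.subtype = ⊥ :=
        (RingHom.injective_iff_ker_eq_bot _).mp B.subtype_injective
      rw [this]
      exact bot_le)
    have hle : Ideal.map (algebraMap ↥B (Polynomial K)) J ≤ q := by
      rw [Ideal.map_le_iff_le_comap, hqcomap]; exact hJn
    rw [hsubB, hJext] at hle
    exact hqmax.ne_top (top_le_iff.mp hle)
  -- the explicit "denominator" ideal T
  set T : Ideal ↥B := Tid A hCA m with hTdef
  have hJT : J ≤ T := by
    rw [hJdef, Ideal.map_le_iff_le_comap]
    intro a ham
    rw [hTdef, Ideal.mem_comap, mem_Tid]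
    exact ⟨1, one_ne_zero, a, ham, by simp [psiAB]⟩
  have h1T : (1 : ↥B) ∈ T := hJT (hJtop ▸ Submodule.mem_top)
  rw [hTdef, mem_Tid] at h1T
  obtain ⟨s, hs, a, ham, heq⟩ := h1T
  have heq2 : φ (Polynomial.C s) = φ (a : Polynomial C) := by
    rw [hφ]
    show (phiC C) (Polynomial.C s) = _
    rw [← heq]
    simp [phiC]
  have hca : (a : Polynomial C) = Polynomial.C s := (phiC_injective heq2).symm
  exact hgoal a ham s hs hca
end

section
/- Let K be a subfield of k[[t^ℚ]] that is algebraically closed as a field and contains k and t. Let E be a subring with K⁺[y] ⊆ E ⊊ K[y]. Then there exists a subring E' with E ⊆ E' ⊊ K[y] such that E' satisfies property P₂ in K[y]. -/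
open Polynomial

/-- The subring of the Hahn series field `k[[t^ℚ]]` consisting of series with
support contained in `[0, ∞)`. -/
def HahnPlus (k : Type*) [Field k] : Subring (HahnSeries ℚ k) where
  carrier := {α : HahnSeries ℚ k | ∀ s ∈ α.support, (0 : ℚ) ≤ s}
  zero_mem' := by
    intro s hs
    simp [HahnSeries.support_zero] at hs
  one_mem' := by
    intro s hs
    have h := HahnSeries.support_single_subset (a := (0 : ℚ)) (r := (1 : k))
    rw [show ((HahnSeries.single (0:ℚ) (1:k)) : HahnSeries ℚ k) = 1 from rfl] at h
    have := h hs
    simp only [Set.mem_singleton_iff] at this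
    simp [this]
  add_mem' := by
    intro a b ha hb s hs
    rcases HahnSeries.support_add_subset _ _ hs with h | h
    · exact ha s h
    · exact hb s h
  neg_mem' := by
    intro a ha s hs
    rw [HahnSeries.support_neg] at hs
    exact ha s hs
  mul_mem' := by
    intro a b ha hb s hs
    rcases Set.mem_add.mp (HahnSeries.support_mul_subset hs) with ⟨u, hu, v, hv, rfl⟩
    exact add_nonneg (ha u hu) (hb v hv)

/-- For a subring `B` of a commutative ring `R`, the subring `B[y]` of the polynomial
ring `R[y]` consisting of polynomials all of whose coefficients lie in `B`. -/
def coeffsIn {R : Type*} [CommRing R] (B : Subring R) : Subring (Polynomial R) where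
  carrier := {p : Polynomial R | ∀ n : ℕ, p.coeff n ∈ B}
  zero_mem' := by
    intro n
    rw [Polynomial.coeff_zero]
    exact zero_mem B
  one_mem' := by
    intro n
    rw [Polynomial.coeff_one]
    split
    · exact one_mem B
    · exact zero_mem B
  add_mem' := by
    intro p q hp hq n
    rw [Polynomial.coeff_add]
    exact add_mem (hp n) (hq n)
  neg_mem' := by
    intro p hp n
    rw [Polynomial.coeff_neg]
    exact neg_mem (hp n)
  mul_mem' := by
    intro p q hp hq n
    rw [Polynomial.coeff_mul]
    exact sum_mem fun c _ => mul_mem (hp c.1) (hq c.2)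

/-- `A` is a maximal subring of the subring `T` (inside an ambient ring): `A ⊊ T`
and there is no subring strictly between `A` and `T`. -/
def IsMaximalSubringIn {S : Type*} [Ring S] (A T : Subring S) : Prop :=
  A < T ∧ ∀ B : Subring S, A < B → B ≤ T → B = T

/-- `A` satisfies property `P₂` in the subring `T`: whenever a product of two
elements of `T` lies in `A`, one of the factors lies in `A`. -/
def SatisfiesP2In {S : Type*} [Ring S] (A T : Subring S) : Prop :=
  ∀ r q : S, r ∈ T → q ∈ T → r * q ∈ A → r ∈ A ∨ q ∈ A

section ValuationExistence

variable {F : Type*} [Field F]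

/-- `1` can be written as a polynomial of degree at most `n` in `u`, with
coefficients in `x⁻¹ • M`. -/
def RepIn (M : Subring F) (x u : F) (n : ℕ) : Prop :=
  ∃ e : ℕ → F, (∀ i, x * e i ∈ M) ∧ (1 : F) = ∑ i ∈ Finset.range (n + 1), e i * u ^ i

lemma memM_of_I {M : Subring F} {x xinv w : F} (hxinv : xinv ∈ M) (hxx : x * xinv = 1)
    (hw : x * w ∈ M) : w ∈ M := by
  have h : w = xinv * (x * w) := by
    rw [← mul_assoc, mul_comm xinv x, hxx, one_mul]
  rw [h]
  exact mul_mem hxinv hw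

lemma pow_cancel {u v : F} (huv : u * v = 1) {a b : ℕ} (hba : b ≤ a) :
    v ^ b * u ^ a = u ^ (a - b) := by
  have h : u ^ a = u ^ (a - b) * u ^ b := by rw [← pow_add]; congr 1; omega
  rw [h, mul_comm (u ^ (a - b)) (u ^ b), ← mul_assoc, mul_comm (v ^ b) (u ^ b), ← mul_pow,
    huv, one_pow, one_mul]

lemma rep_reduction {M : Subring F} {x xinv : F} (hxinv : xinv ∈ M) (hxx : x * xinv = 1)
    {u v : F} (huv : u * v = 1) {n m : ℕ}
    (hm1 : 1 ≤ m) (hmn : m ≤ n) (hu : RepIn M x u n) (hv : RepIn M x v m) :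
    RepIn M x u (n - 1) := by
  obtain ⟨e, he, h1⟩ := hu
  obtain ⟨f, hf, h2⟩ := hv
  have hn1 : 1 ≤ n := le_trans hm1 hmn
  have hf0M : f 0 ∈ M := memM_of_I hxinv hxx (hf 0)
  have henM : e n ∈ M := memM_of_I hxinv hxx (he n)
  -- rewrite h2
  rw [Finset.sum_range_succ'] at h2
  rw [pow_zero, mul_one] at h2
  have h2' : (1 : F) - f 0 = ∑ j ∈ Finset.range m, f (j + 1) * v ^ (j + 1) :=
    sub_eq_of_eq_add h2
  rw [Finset.sum_range_succ] at h1
  -- key identity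
  have key : (1 : F) = f 0 + (∑ i ∈ Finset.range n, ((1 - f 0) * e i) * u ^ i)
      + ∑ j ∈ Finset.range m, (f (j + 1) * e n) * u ^ (n - 1 - j) := by
    have hc : ((1 : F) - f 0) * (e n * u ^ n)
        = ∑ j ∈ Finset.range m, (f (j + 1) * e n) * u ^ (n - 1 - j) := by
      rw [h2', Finset.sum_mul]
      refine Finset.sum_congr rfl fun j hj => ?_
      have hjm : j < m := Finset.mem_range.mp hj
      have hpc : v ^ (j + 1) * u ^ n = u ^ (n - 1 - j) := by
        rw [pow_cancel huv (by omega)]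
        congr 1
        omega
      calc f (j + 1) * v ^ (j + 1) * (e n * u ^ n)
          = f (j + 1) * e n * (v ^ (j + 1) * u ^ n) := by ring
        _ = f (j + 1) * e n * u ^ (n - 1 - j) := by rw [hpc]
    have hS : ((1 : F) - f 0) * (∑ i ∈ Finset.range n, e i * u ^ i)
        = ∑ i ∈ Finset.range n, ((1 - f 0) * e i) * u ^ i := by
      rw [Finset.mul_sum]
      exact Finset.sum_congr rfl fun i _ => by ring
    calc (1 : F)
        = (1 - f 0) * ((∑ i ∈ Finset.range n, e i * u ^ i) + e n * u ^ n) + f 0 := by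
          rw [← h1]; ring
      _ = ((1 - f 0) * (∑ i ∈ Finset.range n, e i * u ^ i))
          + ((1 - f 0) * (e n * u ^ n)) + f 0 := by ring
      _ = f 0 + (∑ i ∈ Finset.range n, ((1 - f 0) * e i) * u ^ i)
          + ∑ j ∈ Finset.range m, (f (j + 1) * e n) * u ^ (n - 1 - j) := by
          rw [hS, hc]; ring
  -- new coefficients
  refine ⟨fun i => (if i = 0 then f 0 else 0) + (1 - f 0) * e i
      + (if n ≤ i + m then f (n - i) * e n else 0), fun i => ?_, ?_⟩
  · rw [mul_add, mul_add]
    refine add_mem (add_mem ?_ ?_) ?_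
    · split
      · exact hf 0
      · rw [mul_zero]; exact zero_mem M
    · rw [mul_left_comm]
      exact mul_mem (sub_mem (one_mem M) hf0M) (he i)
    · split
      · rw [← mul_assoc]
        exact mul_mem (hf (n - i)) henM
      · rw [mul_zero]; exact zero_mem M
  · have hrn : n - 1 + 1 = n := by omega
    rw [hrn]
    have expand : ∑ i ∈ Finset.range n,
        ((if i = 0 then f 0 else 0) + (1 - f 0) * e i
          + (if n ≤ i + m then f (n - i) * e n else 0)) * u ^ i
        = (∑ i ∈ Finset.range n, (if i = 0 then f 0 else 0) * u ^ i)
          + (∑ i ∈ Finset.range n, ((1 - f 0) * e i) * u ^ i)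
          + ∑ i ∈ Finset.range n, (if n ≤ i + m then f (n - i) * e n else 0) * u ^ i := by
      rw [← Finset.sum_add_distrib, ← Finset.sum_add_distrib]
      refine Finset.sum_congr rfl fun i _ => by ring
    have hA : ∑ i ∈ Finset.range n, (if i = 0 then f 0 else 0) * u ^ i = f 0 := by
      rw [Finset.sum_eq_single_of_mem 0 (Finset.mem_range.mpr (by omega))]
      · simp
      · intro i _ hi0
        simp [hi0]
    have hC : ∑ i ∈ Finset.range n, (if n ≤ i + m then f (n - i) * e n else 0) * u ^ i
        = ∑ j ∈ Finset.range m, (f (j + 1) * e n) * u ^ (n - 1 - j) := by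
      have hstep : ∀ i ∈ Finset.range n, (if n ≤ i + m then f (n - i) * e n else 0) * u ^ i
          = if n ≤ i + m then (f (n - i) * e n) * u ^ i else 0 := by
        intro i _
        split <;> simp
      rw [Finset.sum_congr rfl hstep, ← Finset.sum_filter]
      refine (Finset.sum_nbij' (fun j => n - 1 - j) (fun i => n - 1 - i) ?_ ?_ ?_ ?_ ?_).symm
      · intro j hj
        simp only [Finset.mem_range] at hj
        simp only [Finset.mem_filter, Finset.mem_range]
        omega
      · intro i hi
        simp only [Finset.mem_filter, Finset.mem_range] at hi
        simp only [Finset.mem_range]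
        omega
      · intro j hj
        simp only [Finset.mem_range] at hj
        show n - 1 - (n - 1 - j) = j
        omega
      · intro i hi
        simp only [Finset.mem_filter, Finset.mem_range] at hi
        show n - 1 - (n - 1 - i) = i
        omega
      · intro j hj
        simp only [Finset.mem_range] at hj
        show f (j + 1) * e n * u ^ (n - 1 - j) = f (n - (n - 1 - j)) * e n * u ^ (n - 1 - j)
        have h1' : n - (n - 1 - j) = j + 1 := by omega
        rw [h1']
    rw [expand, hA, hC, ← key]


lemma repIn_zero_mem {M : Subring F} {x w : F} (h : RepIn M x w 0) : x ∈ M := by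
  obtain ⟨e, he, h1⟩ := h
  have : (1 : F) = e 0 := by simpa using h1
  have h2 := he 0
  rw [← this, mul_one] at h2
  exact h2

lemma exists_valuation_overring (R : Subring F) (x xinv : F)
    (hxinv : xinv ∈ R) (hxx : x * xinv = 1) (hx : x ∉ R) :
    ∃ M : Subring F, R ≤ M ∧ x ∉ M ∧ ∀ z : F, z ∈ M ∨ z⁻¹ ∈ M := by
  classical
  have hub : ∀ c ⊆ {B : Subring F | x ∉ B}, IsChain (· ≤ ·) c → ∀ y ∈ c,
      ∃ ub ∈ {B : Subring F | x ∉ B}, ∀ z ∈ c, z ≤ ub := by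
    intro c hcs hchain y hy
    refine ⟨sSup c, ?_, fun z hz => le_sSup hz⟩
    intro hxc
    rw [Subring.mem_sSup_of_directedOn ⟨y, hy⟩ hchain.directedOn] at hxc
    obtain ⟨B, hBc, hxB⟩ := hxc
    exact hcs hBc hxB
  obtain ⟨M, hRM, hMmax⟩ := zorn_le_nonempty₀ {B : Subring F | x ∉ B} hub R hx
  have hxM : x ∉ M := hMmax.1
  have hx0 : x ≠ 0 := fun h => hxM (h ▸ zero_mem M)
  have hxinvM : xinv ∈ M := hRM hxinv
  refine ⟨M, hRM, hxM, fun z => ?_⟩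
  by_cases hz0 : z = 0
  · left; rw [hz0]; exact zero_mem M
  by_contra hcon
  push_neg at hcon
  obtain ⟨hz, hzi⟩ := hcon
  -- both adjунctions contain x
  have hadj : ∀ w : F, w ∉ M → ∃ n, RepIn M x w n := by
    intro w hw
    have hMMw : M ≤ (Polynomial.eval₂RingHom M.subtype w).range := by
      intro a ha
      exact ⟨Polynomial.C ⟨a, ha⟩, Polynomial.eval₂_C _ _⟩
    have hwMw : w ∈ (Polynomial.eval₂RingHom M.subtype w).range :=
      ⟨Polynomial.X, Polynomial.eval₂_X _ _⟩
    have hxMw : x ∈ (Polynomial.eval₂RingHom M.subtype w).range := by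
      by_contra hxMw
      exact hw ((hMmax.2 hxMw hMMw) hwMw)
    obtain ⟨p, hp⟩ := hxMw
    refine ⟨p.natDegree, fun i => x⁻¹ * (M.subtype (p.coeff i)), fun i => ?_, ?_⟩
    · rw [← mul_assoc, mul_inv_cancel₀ hx0, one_mul]
      exact (p.coeff i).2
    · have hev : x = ∑ i ∈ Finset.range (p.natDegree + 1),
          M.subtype (p.coeff i) * w ^ i := by
        rw [← hp]
        exact Polynomial.eval₂_eq_sum_range _ _
      calc (1 : F) = x⁻¹ * x := (inv_mul_cancel₀ hx0).symm
        _ = ∑ i ∈ Finset.range (p.natDegree + 1), (x⁻¹ * M.subtype (p.coeff i)) * w ^ i := by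
            rw [hev, Finset.mul_sum]
            exact Finset.sum_congr rfl fun i _ => by ring
  obtain ⟨nz, hnz⟩ := hadj z hz
  obtain ⟨ni, hni⟩ := hadj z⁻¹ hzi
  have hPz : ∃ n, RepIn M x z n := ⟨nz, hnz⟩
  have hPi : ∃ n, RepIn M x z⁻¹ n := ⟨ni, hni⟩
  set a := Nat.find hPz with ha
  set b := Nat.find hPi with hb
  have hra : RepIn M x z a := Nat.find_spec hPz
  have hrb : RepIn M x z⁻¹ b := Nat.find_spec hPi
  have ha1 : 1 ≤ a := by
    rcases Nat.eq_zero_or_pos a with h | h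
    · exact absurd (repIn_zero_mem (h ▸ hra)) hxM
    · exact h
  have hb1 : 1 ≤ b := by
    rcases Nat.eq_zero_or_pos b with h | h
    · exact absurd (repIn_zero_mem (h ▸ hrb)) hxM
    · exact h
  rcases le_total b a with hle | hle
  · have := rep_reduction hxinvM hxx (mul_inv_cancel₀ hz0) hb1 hle hra hrb
    exact Nat.find_min hPz (by omega) this
  · have := rep_reduction hxinvM hxx (inv_mul_cancel₀ hz0) ha1 hle hrb hra
    exact Nat.find_min hPi (by omega) this

end ValuationExistence

set_option maxHeartbeats 1000000
set_option synthInstance.maxHeartbeats 1000000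

/-- Any subring `E` with `K⁺[y] ⊆ E ⊊ K[y]` is contained in a proper subring of
`K[y]` satisfying property `P₂` in `K[y]`. -/


theorem exists_p2_overring
    {k : Type*} [Field k] [IsAlgClosed k]
    (K : Subfield (HahnSeries ℚ k)) [IsAlgClosed ↥K]
    (hkK : ∀ c : k, HahnSeries.C c ∈ K)
    (htK : (HahnSeries.single (1 : ℚ) (1 : k) : HahnSeries ℚ k) ∈ K)
    (E : Subring (Polynomial (HahnSeries ℚ k)))
    (hlow : coeffsIn (K.toSubring ⊓ HahnPlus k) ≤ E)
    (hup : E < coeffsIn K.toSubring) :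
    ∃ E' : Subring (Polynomial (HahnSeries ℚ k)),
      E ≤ E' ∧ E' < coeffsIn K.toSubring ∧
      SatisfiesP2In E' (coeffsIn K.toSubring) := by
  classical
  set tt : HahnSeries ℚ k := HahnSeries.single (1 : ℚ) (1 : k) with htt
  have ht0 : tt ≠ 0 := HahnSeries.single_ne_zero one_ne_zero
  have hpow : ∀ N : ℕ, tt ^ N = HahnSeries.single ((N : ℚ)) (1 : k) := by
    intro N
    rw [htt, HahnSeries.single_pow]
    norm_num
  -- the constant polynomial `t` lies in `E`
  have htE : Polynomial.C tt ∈ E := by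
    apply hlow
    intro n
    rw [Polynomial.coeff_C]
    split
    · refine Subring.mem_inf.mpr ⟨htK, ?_⟩
      intro s hs
      have h1 := HahnSeries.support_single_subset hs
      simp only [Set.mem_singleton_iff] at h1
      rw [h1]
      norm_num
    · exact zero_mem _
  -- the constant polynomial `t⁻¹` is in `K[y]` but not in `E`
  have htinvK : Polynomial.C tt⁻¹ ∈ coeffsIn K.toSubring := by
    intro n
    rw [Polynomial.coeff_C]
    split
    · exact K.inv_mem htK
    · exact zero_mem _
  have hCtinv_notE : Polynomial.C tt⁻¹ ∉ E := by
    intro hmem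
    apply hup.ne
    refine le_antisymm hup.le ?_
    intro p hp
    rw [Polynomial.as_sum_support p]
    refine sum_mem fun i _ => ?_
    have hc : p.coeff i ∈ K := hp i
    rcases eq_or_ne (p.coeff i) 0 with h0 | h0
    · rw [h0, Polynomial.monomial_zero_right]
      exact zero_mem E
    obtain ⟨N, hN⟩ := exists_nat_ge (-(p.coeff i).order)
    have key : (tt⁻¹) ^ N * (tt ^ N * p.coeff i) = p.coeff i := by
      rw [← mul_assoc, ← mul_pow, inv_mul_cancel₀ ht0, one_pow, one_mul]
    have h1 : tt ^ N * p.coeff i ∈ K.toSubring ⊓ HahnPlus k := by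
      refine Subring.mem_inf.mpr ⟨mul_mem (pow_mem htK N) hc, ?_⟩
      intro s hs
      obtain ⟨u, hu, v, hv, rfl⟩ := Set.mem_add.mp (HahnSeries.support_mul_subset hs)
      rw [hpow N] at hu
      have hu' := HahnSeries.support_single_subset hu
      simp only [Set.mem_singleton_iff] at hu'
      have hv' : (p.coeff i).order ≤ v :=
        HahnSeries.order_le_of_coeff_ne_zero ((HahnSeries.mem_support _ _).mp hv)
      show (0 : ℚ) ≤ u + v
      rw [hu']
      linarith
    have hmono : Polynomial.monomial i (p.coeff i)
        = (Polynomial.C tt⁻¹) ^ N * Polynomial.monomial i (tt ^ N * p.coeff i) := by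
      rw [← Polynomial.C_mul_X_pow_eq_monomial, ← Polynomial.C_mul_X_pow_eq_monomial,
        ← Polynomial.C_pow, ← mul_assoc, ← Polynomial.C_mul, key]
    rw [hmono]
    refine mul_mem (pow_mem hmem N) (hlow ?_)
    intro n
    rw [Polynomial.coeff_monomial]
    split
    · exact h1
    · exact zero_mem _
  -- move to the fraction field of the polynomial ring
  set P := Polynomial (HahnSeries ℚ k)
  set F := FractionRing P with hF
  set ι : P →+* F := algebraMap P F with hι
  have hinj : Function.Injective ι := IsFractionRing.injective P F
  have hxx : ι (Polynomial.C tt⁻¹) * ι (Polynomial.C tt) = 1 := by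
    rw [← map_mul, ← Polynomial.C_mul, inv_mul_cancel₀ ht0, Polynomial.C_1, map_one]
  have hxnotR : ι (Polynomial.C tt⁻¹) ∉ E.map ι := by
    rintro ⟨w, hw, hwx⟩
    exact hCtinv_notE (hinj hwx ▸ hw)
  obtain ⟨M, hRM, hxM, hval⟩ := exists_valuation_overring (E.map ι)
    (ι (Polynomial.C tt⁻¹)) (ι (Polynomial.C tt))
    ⟨Polynomial.C tt, htE, rfl⟩ hxx hxnotR
  refine ⟨coeffsIn K.toSubring ⊓ M.comap ι, ?_, ?_, ?_⟩
  · intro e he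
    exact Subring.mem_inf.mpr ⟨hup.le he, hRM ⟨e, he, rfl⟩⟩
  · refine lt_of_le_of_ne inf_le_left ?_
    intro heq
    have hmem : Polynomial.C tt⁻¹ ∈ coeffsIn K.toSubring ⊓ M.comap ι := by
      rw [heq]
      exact htinvK
    exact hxM (Subring.mem_inf.mp hmem).2
  · intro r q hr hq hrq
    have hrqM : ι r * ι q ∈ M := by
      have := (Subring.mem_inf.mp hrq).2
      rw [Subring.mem_comap, map_mul] at this
      exact this
    rcases hval (ι r) with h | h
    · exact Or.inl (Subring.mem_inf.mpr ⟨hr, h⟩)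
    · rcases eq_or_ne r 0 with rfl | hr0
      · exact Or.inl (zero_mem _)
      · have hιr0 : ι r ≠ 0 := fun hh => hr0 (hinj (by rw [hh, map_zero]))
        have hq' : ι q = (ι r)⁻¹ * (ι r * ι q) := by rw [inv_mul_cancel_left₀ hιr0]
        refine Or.inr (Subring.mem_inf.mpr ⟨hq, Subring.mem_comap.mpr ?_⟩)
        rw [hq']
        exact mul_mem h hrqM
end
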